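/- arXiv:1301.3419 — 9 statements merged into one kernel-verified Lean document; each statement's English description precedes it below -/
import Mathlib

section
/- Fix λ ∈ ℝ and functions f, g : ℕ → ℝ. For every finite set X, the sum over all ordered pairs (S, T) of subsets of X with S ∪ T = X of λ^{#(S∩T)} · f(#S) · g(#T) equals Σ_{(u₁,u₂,u₃) ∈ ℕ³, u₁+u₂+u₃ = #X} λ^{u₁} · (#X)!/(u₁!·u₂!·u₃!) · f(u₁+u₂) · g(u₁+u₃); in other words, it equals (f ⋆ g)(#X). -/
/-- The weight-`lam` product on functions `ℕ → ℝ`, encoding the product of the complete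
free commutative Rota–Baxter algebra of weight `lam` on `ℝ` in the basis `1_k`:
`(a ⋆ b)(u) = Σ_{u₁+u₂+u₃ = u} lam^{u₁} · u!/(u₁!·u₂!·u₃!) · a(u₁+u₂) · b(u₁+u₃)`. -/
noncomputable def starMul (lam : ℝ) (a b : ℕ → ℝ) : ℕ → ℝ := fun u =>
  ∑ p ∈ Finset.HasAntidiagonal.antidiagonal u, ∑ q ∈ Finset.HasAntidiagonal.antidiagonal p.2,
    lam ^ p.1 * ((Nat.factorial u : ℝ) /
      ((Nat.factorial p.1 : ℝ) * (Nat.factorial q.1 : ℝ) * (Nat.factorial q.2 : ℝ))) *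
      a (p.1 + q.1) * b (p.1 + q.2)

/-! A pair `(S, T)` with `S ∪ T = X` is the same as a splitting of `X` into the three disjoint
blocks `I = S ∩ T`, `A = S \ T` and `X \ S`, and the summand only depends on their sizes
`(u₁, u₂, u₃)`. Choosing `I` first and then `A` inside `X \ I` counts these splittings as
`C(n, u₁) · C(u₂ + u₃, u₂) = n! / (u₁! u₂! u₃!)`, which is the coefficient in `starMul`. -/

open Finset Nat

namespace Finset

theorem sum_powerset_apply_card_card_sdiff {α β : Type*} [DecidableEq α] [AddCommMonoid β]
    (F : ℕ → ℕ → β) (Y : Finset α) :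
    ∑ A ∈ Y.powerset, F #A #(Y \ A) = ∑ p ∈ antidiagonal #Y, (#Y).choose p.1 • F p.1 p.2 := by
  calc ∑ A ∈ Y.powerset, F #A #(Y \ A) = ∑ A ∈ Y.powerset, F #A (#Y - #A) :=
        sum_congr rfl fun A hA => by rw [card_sdiff_of_subset (mem_powerset.1 hA)]
    _ = _ := by
        rw [sum_powerset_apply_card (fun a => F a (#Y - a)),
          Nat.sum_antidiagonal_eq_sum_range_succ (fun i j => (#Y).choose i • F i j)]

theorem sum_covering_pairs_eq_sum_powerset_sdiff {α β : Type*} [DecidableEq α]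
    [AddCommMonoid β] (X : Finset α) (h : Finset α → Finset α → β) :
    ∑ p ∈ (X.powerset ×ˢ X.powerset).filter (fun p => p.1 ∪ p.2 = X), h p.1 p.2 =
      ∑ I ∈ X.powerset, ∑ A ∈ (X \ I).powerset, h (I ∪ A) (X \ A) := by
  rw [sum_sigma']
  symm
  refine sum_nbij' (fun q => (q.1 ∪ q.2, X \ q.2)) (fun p => ⟨p.1 ∩ p.2, p.1 \ p.2⟩)
    ?_ ?_ ?_ ?_ fun _ _ => rfl
  · rintro ⟨I, A⟩
    grind
  · rintro ⟨S, T⟩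
    grind
  · rintro ⟨I, A⟩ hIA
    simp only [Sigma.mk.injEq, heq_eq_eq]
    grind
  · rintro ⟨S, T⟩ hST
    simp only [Prod.mk.injEq]
    grind

theorem sum_covering_pairs_apply_card {α β : Type*} [DecidableEq α] [AddCommMonoid β]
    (X : Finset α) (F : ℕ → ℕ → ℕ → β) :
    ∑ p ∈ (X.powerset ×ˢ X.powerset).filter (fun p => p.1 ∪ p.2 = X),
        F #(p.1 ∩ p.2) #p.1 #p.2 =
      ∑ I ∈ X.powerset, ∑ A ∈ (X \ I).powerset, F #I (#I + #A) (#I + #((X \ I) \ A)) := by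
  rw [sum_covering_pairs_eq_sum_powerset_sdiff X fun S T => F #(S ∩ T) #S #T]
  refine sum_congr rfl fun I hI => sum_congr rfl fun A hA => ?_
  rw [mem_powerset] at hI hA
  have hIA : Disjoint I A := disjoint_of_subset_right hA disjoint_sdiff
  have hinter : (I ∪ A) ∩ (X \ A) = I := by grind
  have hcompl : X \ A = I ∪ (X \ I) \ A := by grind
  rw [hinter, card_union_of_disjoint hIA, hcompl,
    card_union_of_disjoint (disjoint_of_subset_right sdiff_subset disjoint_sdiff)]

end Finset

theorem Nat.cast_add_choose_mul_add_choose {K : Type*} [Field K] [CharZero K] (i a c : ℕ) :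
    ((i + (a + c)).choose i : K) * (a + c).choose a = (i + (a + c))! / (i ! * a ! * c !) := by
  have : ((a + c)! : K) ≠ 0 := Nat.cast_ne_zero.2 (factorial_ne_zero _)
  rw [Nat.cast_add_choose, Nat.cast_add_choose]
  field_simp

/-- For a finite set `X`, the sum over all ordered pairs `(S, T)` of subsets of `X`
with `S ∪ T = X` of `lam^{#(S∩T)} · f(#S) · g(#T)` equals `(f ⋆ g)(#X)`. -/
theorem stmt1 {α : Type*} [DecidableEq α] (lam : ℝ) (f g : ℕ → ℝ) (X : Finset α) :
    ∑ p ∈ (X.powerset ×ˢ X.powerset).filter (fun p => p.1 ∪ p.2 = X),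
      lam ^ (p.1 ∩ p.2).card * f p.1.card * g p.2.card
      = starMul lam f g X.card := by
  rw [sum_covering_pairs_apply_card X fun k s t => lam ^ k * f s * g t]
  calc _ = ∑ p ∈ antidiagonal #X, (#X).choose p.1 • ∑ q ∈ antidiagonal p.2,
          p.2.choose q.1 • (lam ^ p.1 * f (p.1 + q.1) * g (p.1 + q.2)) := by
        rw [← sum_powerset_apply_card_card_sdiff (fun i m => ∑ q ∈ antidiagonal m,
          m.choose q.1 • (lam ^ i * f (i + q.1) * g (i + q.2))) X]
        exact sum_congr rfl fun I _ => sum_powerset_apply_card_card_sdiff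
          (fun a c => lam ^ #I * f (#I + a) * g (#I + c)) (X \ I)
    _ = starMul lam f g #X := by
        refine sum_congr rfl fun ⟨i, m⟩ hp => ?_
        rw [smul_sum]
        refine sum_congr rfl fun ⟨a, c⟩ hq => ?_
        simp only [HasAntidiagonal.mem_antidiagonal] at hp hq
        subst hq
        rw [← hp, smul_smul, nsmul_eq_mul]
        push_cast
        rw [Nat.cast_add_choose_mul_add_choose]
        ring
end

section
/- Fix λ ∈ ℝ. The weight-λ product ⋆ on functions ℕ → ℝ is commutative and associative, is ℝ-bilinear with respect to pointwise addition and scalar multiplication, and has δ₀ as a two-sided identity: δ₀ ⋆ a = a ⋆ δ₀ = a for every a : ℕ → ℝ. -/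
/-- `δ_k : ℕ → ℝ`, the function with `δ_k(k) = 1` and `δ_k(m) = 0` for `m ≠ k`. -/
noncomputable def delta (k : ℕ) : ℕ → ℝ := fun m => if m = k then 1 else 0

open Finset

def shift (a : ℕ → ℝ) (n : ℕ) : ℝ := a (n + 1)

/-- The summand of `starMul`, where `(p.1, q.1, q.2)` is `(u₁, u₂, u₃)`; the level `u` is kept
free of `u₁ + u₂ + u₃` so that `(u + 1)!` can be split as `(u + 1) · u!`. -/
noncomputable def starTerm (lam : ℝ) (a b : ℕ → ℝ) (u : ℕ) (p q : ℕ × ℕ) : ℝ :=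
  lam ^ p.1 * ((Nat.factorial u : ℝ) /
      ((Nat.factorial p.1 : ℝ) * (Nat.factorial q.1 : ℝ) * (Nat.factorial q.2 : ℝ))) *
      a (p.1 + q.1) * b (p.1 + q.2)

section

variable (lam : ℝ)

theorem starMul_apply (a b : ℕ → ℝ) (u : ℕ) :
    starMul lam a b u = ∑ p ∈ antidiagonal u, ∑ q ∈ antidiagonal p.2, starTerm lam a b u p q :=
  rfl

theorem starTerm_swap (a b : ℕ → ℝ) (u : ℕ) (p q : ℕ × ℕ) :
    starTerm lam a b u p q.swap = starTerm lam b a u p q := by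
  simp only [starTerm, Prod.fst_swap, Prod.snd_swap]
  ring

theorem starMul_comm (a b : ℕ → ℝ) : starMul lam a b = starMul lam b a := by
  funext u
  refine sum_congr rfl fun p _ => ?_
  rw [← Nat.sum_antidiagonal_swap]
  exact sum_congr rfl fun q _ => starTerm_swap lam a b u p q

theorem starMul_add_left (a b c : ℕ → ℝ) :
    starMul lam (a + b) c = starMul lam a c + starMul lam b c := by
  funext u
  simp only [starMul_apply, Pi.add_apply, ← sum_add_distrib]
  refine sum_congr rfl fun p _ => sum_congr rfl fun q _ => ?_
  simp only [starTerm, Pi.add_apply]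
  ring

theorem starMul_add_right (a b c : ℕ → ℝ) :
    starMul lam a (b + c) = starMul lam a b + starMul lam a c := by
  simp only [starMul_comm lam a, starMul_add_left]

theorem starMul_smul_left (r : ℝ) (a b : ℕ → ℝ) :
    starMul lam (r • a) b = r • starMul lam a b := by
  funext u
  simp only [starMul_apply, Pi.smul_apply, smul_eq_mul, mul_sum]
  refine sum_congr rfl fun p _ => sum_congr rfl fun q _ => ?_
  simp only [starTerm, Pi.smul_apply, smul_eq_mul]
  ring

theorem starMul_smul_right (r : ℝ) (a b : ℕ → ℝ) :
    starMul lam a (r • b) = r • starMul lam a b := by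
  simp only [starMul_comm lam a, starMul_smul_left]

theorem zero_starMul (b : ℕ → ℝ) : starMul lam 0 b = 0 := by
  simpa using starMul_smul_left lam 0 0 b

theorem starMul_apply_zero (a b : ℕ → ℝ) : starMul lam a b 0 = a 0 * b 0 := by
  simp [starMul]

theorem sum_fst_mul_starTerm (a b : ℕ → ℝ) (u : ℕ) :
    ∑ p ∈ antidiagonal (u + 1), ∑ q ∈ antidiagonal p.2, (p.1 : ℝ) * starTerm lam a b u p q
      = lam * starMul lam (shift a) (shift b) u := by
  rw [Nat.sum_antidiagonal_succ, starMul_apply, mul_sum]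
  simp only [Nat.cast_zero, zero_mul, sum_const_zero, zero_add]
  refine sum_congr rfl fun p _ => ?_
  rw [mul_sum]
  refine sum_congr rfl fun q _ => ?_
  simp only [starTerm, shift, Nat.factorial_succ, pow_succ,
    show p.1 + 1 + q.1 = p.1 + q.1 + 1 by omega, show p.1 + 1 + q.2 = p.1 + q.2 + 1 by omega]
  push_cast
  field_simp

theorem sum_snd_fst_mul_starTerm (a b : ℕ → ℝ) (u : ℕ) :
    ∑ p ∈ antidiagonal (u + 1), ∑ q ∈ antidiagonal p.2, (q.1 : ℝ) * starTerm lam a b u p q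
      = starMul lam (shift a) b u := by
  rw [Nat.sum_antidiagonal_succ', starMul_apply]
  simp only [Nat.antidiagonal_zero, sum_singleton, Nat.cast_zero, zero_mul, zero_add]
  refine sum_congr rfl fun p _ => ?_
  rw [Nat.sum_antidiagonal_succ]
  simp only [Nat.cast_zero, zero_mul, zero_add]
  refine sum_congr rfl fun q _ => ?_
  simp only [starTerm, shift, Nat.factorial_succ, show p.1 + (q.1 + 1) = p.1 + q.1 + 1 by omega]
  push_cast
  field_simp

theorem sum_snd_snd_mul_starTerm (a b : ℕ → ℝ) (u : ℕ) :
    ∑ p ∈ antidiagonal (u + 1), ∑ q ∈ antidiagonal p.2, (q.2 : ℝ) * starTerm lam a b u p q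
      = starMul lam a (shift b) u := by
  rw [starMul_comm, ← sum_snd_fst_mul_starTerm]
  refine sum_congr rfl fun p _ => ?_
  rw [← Nat.sum_antidiagonal_swap]
  refine sum_congr rfl fun q _ => ?_
  rw [starTerm_swap, Prod.snd_swap]

theorem starMul_apply_succ (a b : ℕ → ℝ) (u : ℕ) :
    starMul lam a b (u + 1) = starMul lam (shift a) b u + starMul lam a (shift b) u
      + lam * starMul lam (shift a) (shift b) u := by
  rw [← sum_fst_mul_starTerm, ← sum_snd_fst_mul_starTerm, ← sum_snd_snd_mul_starTerm,
    starMul_apply]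
  simp only [← sum_add_distrib]
  refine sum_congr rfl fun p hp => sum_congr rfl fun q hq => ?_
  have hpq : (p.1 : ℝ) + q.1 + q.2 = u + 1 := by
    rw [HasAntidiagonal.mem_antidiagonal] at hp hq
    exact_mod_cast (show p.1 + q.1 + q.2 = u + 1 by omega)
  simp only [starTerm, Nat.factorial_succ]
  push_cast
  rw [← hpq]
  ring

theorem shift_starMul (a b : ℕ → ℝ) :
    shift (starMul lam a b) = starMul lam (shift a) b + starMul lam a (shift b)
      + lam • starMul lam (shift a) (shift b) :=
  funext fun u => starMul_apply_succ lam a b u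

theorem starMul_assoc (a b c : ℕ → ℝ) :
    starMul lam (starMul lam a b) c = starMul lam a (starMul lam b c) := by
  funext u
  induction u generalizing a b c with
  | zero => simp only [starMul_apply_zero, mul_assoc]
  | succ u ih =>
    simp only [starMul_apply_succ, shift_starMul, starMul_add_left, starMul_add_right,
      starMul_smul_left, starMul_smul_right, Pi.add_apply, Pi.smul_apply, smul_eq_mul, ih]
    ring

theorem shift_delta_zero : shift (delta 0) = 0 := by
  funext n
  simp [shift, delta]

theorem delta_zero_starMul (a : ℕ → ℝ) : starMul lam (delta 0) a = a := by
  funext u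
  induction u generalizing a with
  | zero => simp [starMul_apply_zero, delta]
  | succ u ih => simp [starMul_apply_succ, shift_delta_zero, zero_starMul, ih, shift]

theorem starMul_delta_zero (a : ℕ → ℝ) : starMul lam a (delta 0) = a := by
  rw [starMul_comm, delta_zero_starMul]

end

/-- The weight-`lam` product `⋆` is commutative, associative, ℝ-bilinear with respect
to pointwise addition and scalar multiplication, and has `δ₀` as a two-sided identity. -/
theorem stmt2 (lam : ℝ) :
    (∀ a b : ℕ → ℝ, starMul lam a b = starMul lam b a) ∧
    (∀ a b c : ℕ → ℝ, starMul lam (starMul lam a b) c = starMul lam a (starMul lam b c)) ∧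
    (∀ a b c : ℕ → ℝ, starMul lam (a + b) c = starMul lam a c + starMul lam b c) ∧
    (∀ a b c : ℕ → ℝ, starMul lam a (b + c) = starMul lam a b + starMul lam a c) ∧
    (∀ (r : ℝ) (a b : ℕ → ℝ), starMul lam (r • a) b = r • starMul lam a b) ∧
    (∀ (r : ℝ) (a b : ℕ → ℝ), starMul lam a (r • b) = r • starMul lam a b) ∧
    (∀ a : ℕ → ℝ, starMul lam (delta 0) a = a) ∧
    (∀ a : ℕ → ℝ, starMul lam a (delta 0) = a) :=
  ⟨starMul_comm lam, starMul_assoc lam, starMul_add_left lam, starMul_add_right lam,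
    starMul_smul_left lam, starMul_smul_right lam, delta_zero_starMul lam,
    starMul_delta_zero lam⟩
end

section
/- (Generalized Product Formula.) Fix λ ∈ ℝ, an integer k ≥ 1 and functions f₁, …, f_k : ℕ → ℝ. For every n ∈ ℕ, the left-associated iterated product (⋯(f₁ ⋆ f₂) ⋆ ⋯ ) ⋆ f_k evaluated at n equals the sum over all k-tuples (T₁, …, T_k) of (not necessarily disjoint) subsets of [n] = {1,…,n} with T₁ ∪ ⋯ ∪ T_k = [n] of λ^{(#T₁ + ⋯ + #T_k) − n} · f₁(#T₁) ⋯ f_k(#T_k). -/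
/-- The left-associated iterated `⋆`-product: `starIter lam f j = f 0 ⋆ f 1 ⋆ ⋯ ⋆ f j`. -/
noncomputable def starIter (lam : ℝ) (f : ℕ → ℕ → ℝ) : ℕ → ℕ → ℝ
  | 0 => f 0
  | j + 1 => starMul lam (starIter lam f j) (f (j + 1))

/-!
A pair `(P, Q)` with `P ∪ Q = A` is the same as a decomposition of `A` into the disjoint pieces
`I = P ∩ Q`, `J = P \ Q`, `A \ P`; there are `#A! / (i! j! (#A - i - j)!)` of them with
`#I = i`, `#J = j`, which is exactly the coefficient in the definition of `⋆`. Hence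
`(a ⋆ b) #A` is the sum of `λ ^ (#P + #Q - #A) a #P b #Q` over such covering pairs.
The formula for `k` factors follows by induction, since a covering `(k + 1)`-tuple of `A` is a
covering `k`-tuple of some `P` followed by a `Q` with `P ∪ Q = A`.
-/

open Finset
open scoped Nat

lemma cast_factorial_div_eq_choose_mul_choose {M i j : ℕ} (hi : i ≤ M) (hj : j ≤ M - i) :
    (M ! : ℝ) / (i ! * j ! * (M - i - j)! : ℝ) = M.choose i * (M - i).choose j := by
  rw [Nat.cast_choose ℝ hi, Nat.cast_choose ℝ hj]
  field_simp

lemma starMul_eq_sum_range (lam : ℝ) (a b : ℕ → ℝ) (M : ℕ) :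
    starMul lam a b M = ∑ i ∈ range (M + 1), ∑ j ∈ range (M - i + 1),
      (M.choose i * (M - i).choose j : ℝ) * (lam ^ i * a (i + j) * b (M - j)) := by
  simp only [starMul, Nat.sum_antidiagonal_eq_sum_range_succ_mk]
  refine sum_congr rfl fun i hi => sum_congr rfl fun j hj => ?_
  rw [mem_range] at hi hj
  rw [cast_factorial_div_eq_choose_mul_choose (by omega) (by omega),
    show i + (M - i - j) = M - j by omega]
  ring

section

variable {α : Type*} [DecidableEq α]

lemma Fin.biUnion_univ_eq_union_last {n : ℕ} (T : Fin (n + 1) → Finset α) :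
    univ.biUnion T = (univ.biUnion fun i : Fin n => T i.castSucc) ∪ T (Fin.last n) := by
  ext x
  simp [Fin.exists_fin_succ']

variable [Fintype α]

lemma sum_filter_union_eq_eq_sum_powerset_sdiff {M : Type*} [AddCommMonoid M] (A : Finset α)
    (g : Finset α × Finset α → M) :
    ∑ p ∈ univ.filter (fun p : Finset α × Finset α => p.1 ∪ p.2 = A), g p =
      ∑ I ∈ A.powerset, ∑ J ∈ (A \ I).powerset, g (I ∪ J, A \ J) := by
  rw [sum_sigma']
  refine sum_nbij' (fun p => ⟨p.1 ∩ p.2, p.1 \ p.2⟩) (fun x => (x.1 ∪ x.2, A \ x.2))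
    ?_ ?_ ?_ ?_ ?_ <;> rintro ⟨X, Y⟩ h <;>
    simp only [mem_filter, mem_sigma, mem_powerset, mem_univ, true_and, Prod.mk.injEq,
      Sigma.mk.injEq] at h ⊢
  any_goals grind
  subst h
  exact congrArg g (Prod.ext (by grind) (by grind))

lemma starMul_card_eq_sum_union_eq (lam : ℝ) (a b : ℕ → ℝ) (A : Finset α) :
    starMul lam a b #A =
      ∑ p ∈ univ.filter (fun p : Finset α × Finset α => p.1 ∪ p.2 = A),
        lam ^ (#p.1 + #p.2 - #A) * a #p.1 * b #p.2 := by
  have inner : ∀ I ∈ A.powerset, ∑ J ∈ (A \ I).powerset,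
      lam ^ (#(I ∪ J) + #(A \ J) - #A) * a #(I ∪ J) * b #(A \ J) =
        ∑ j ∈ range (#A - #I + 1),
          (#A - #I).choose j • (lam ^ #I * a (#I + j) * b (#A - j)) := by
    intro I hI
    rw [mem_powerset] at hI
    rw [← card_sdiff_of_subset hI, ← sum_powerset_apply_card]
    refine sum_congr rfl fun J hJ => ?_
    rw [mem_powerset, subset_sdiff] at hJ
    have hJA : #J ≤ #A := card_le_card hJ.1
    rw [card_union_of_disjoint hJ.2.symm, card_sdiff_of_subset hJ.1,
      show #I + #J + (#A - #J) - #A = #I by omega]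
  rw [sum_filter_union_eq_eq_sum_powerset_sdiff, sum_congr rfl inner, starMul_eq_sum_range,
    sum_powerset_apply_card (fun i => ∑ j ∈ range (#A - i + 1),
      (#A - i).choose j • (lam ^ i * a (i + j) * b (#A - j)))]
  simp only [nsmul_eq_mul, mul_sum, mul_assoc]

lemma sum_filter_biUnion_eq_sum_snoc {M : Type*} [AddCommMonoid M] {n : ℕ} (A : Finset α)
    (F : (Fin (n + 1) → Finset α) → M) :
    ∑ T ∈ univ.filter (fun T : Fin (n + 1) → Finset α => univ.biUnion T = A), F T =
      ∑ p ∈ univ.filter (fun p : Finset α × Finset α => p.1 ∪ p.2 = A),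
        ∑ S ∈ univ.filter (fun S : Fin n → Finset α => univ.biUnion S = p.1),
          F (Fin.snoc S p.2) := by
  rw [sum_sigma']
  refine sum_nbij' (fun T => ⟨(univ.biUnion (Fin.init T), T (Fin.last n)), Fin.init T⟩)
    (fun x => Fin.snoc x.2 x.1.2) ?_ ?_ ?_ ?_ ?_
  · intro T hT
    simp only [mem_filter, mem_univ, true_and, mem_sigma, and_true] at hT ⊢
    exact (Fin.biUnion_univ_eq_union_last T).symm.trans hT
  · rintro ⟨⟨P, Q⟩, S⟩ h
    simp_all [Fin.biUnion_univ_eq_union_last]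
  · intro T _
    simp
  · rintro ⟨⟨P, Q⟩, S⟩ h
    simp_all
  · intro T _
    simp

lemma starIter_card_eq_sum (lam : ℝ) (f : ℕ → ℕ → ℝ) (j : ℕ) (A : Finset α) :
    starIter lam f j #A =
      ∑ T ∈ univ.filter (fun T : Fin (j + 1) → Finset α => univ.biUnion T = A),
        lam ^ ((∑ i, #(T i)) - #A) * ∏ i : Fin (j + 1), f i #(T i) := by
  induction j generalizing A with
  | zero =>
    have hT : ∀ T : Fin 1 → Finset α, univ.biUnion T = A ↔ T = fun _ => A := by
      simp [funext_iff, Fin.forall_fin_one, univ_unique]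
    rw [filter_congr fun T _ => hT T, filter_eq', if_pos (mem_univ _), sum_singleton]
    simp [starIter]
  | succ j ih =>
    rw [starIter, starMul_card_eq_sum_union_eq, sum_filter_biUnion_eq_sum_snoc]
    refine sum_congr rfl fun p hp => ?_
    rw [ih, mul_sum, sum_mul]
    refine sum_congr rfl fun S hS => ?_
    rw [mem_filter] at hp hS
    have hP : #p.1 ≤ ∑ i, #(S i) := hS.2 ▸ card_biUnion_le
    have hA : #A ≤ #p.1 + #p.2 := hp.2 ▸ card_union_le _ _
    have hsum : ∑ i, #((Fin.snoc S p.2 : Fin (j + 2) → Finset α) i) = ∑ i, #(S i) + #p.2 := by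
      simp [Fin.sum_univ_castSucc]
    have hprod : ∏ i : Fin (j + 2), f i #((Fin.snoc S p.2 : Fin (j + 2) → Finset α) i) =
        (∏ i : Fin (j + 1), f i #(S i)) * f (j + 1) #p.2 := by
      simp [Fin.prod_univ_castSucc]
    have hexp : ∑ i, #(S i) + #p.2 - #A = (#p.1 + #p.2 - #A) + (∑ i, #(S i) - #p.1) := by
      omega
    rw [hsum, hprod, hexp, pow_add]
    ring

end

/-- Generalized Product Formula: for `k ≥ 1` functions `f 0, …, f (k-1) : ℕ → ℝ`, the
left-associated iterated product `(⋯(f 0 ⋆ f 1) ⋆ ⋯) ⋆ f (k-1)` evaluated at `n`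
equals the sum over all `k`-tuples `(T₁, …, T_k)` of (not necessarily disjoint)
subsets of `[n]` with union `[n]` of `lam^{(#T₁+⋯+#T_k) − n} · f₁(#T₁) ⋯ f_k(#T_k)`. -/
theorem stmt3 (lam : ℝ) (k : ℕ) (hk : 1 ≤ k) (f : ℕ → ℕ → ℝ) (n : ℕ) :
    starIter lam f (k - 1) n =
      ∑ T ∈ Finset.univ.filter (fun T : Fin k → Finset (Fin n) =>
          Finset.univ.biUnion T = Finset.univ),
        lam ^ ((∑ i, (T i).card) - n) * ∏ i : Fin k, f (i : ℕ) ((T i).card) := by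
  obtain ⟨j, rfl⟩ : ∃ j, k = j + 1 := ⟨k - 1, by omega⟩
  rw [Nat.add_sub_cancel]
  simpa only [Finset.card_fin] using starIter_card_eq_sum lam f j (univ : Finset (Fin n))
end

section
/- Fix λ ∈ ℝ and n ≥ 1. Let δ₁^{⋆n} denote the n-fold left-associated ⋆-product δ₁ ⋆ δ₁ ⋆ ⋯ ⋆ δ₁ (n factors). Then for every m ≤ n one has δ₁^{⋆n}(m) = m! · S(n,m) · λ^{n−m}, and δ₁^{⋆n}(m) = 0 for m > n. -/
/-- The left-associated `n`-fold `⋆`-power `a ⋆ a ⋆ ⋯ ⋆ a` (`n` factors, `n ≥ 1`);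
the value at `0` is set to `δ₀` by convention. -/
noncomputable def starPow (lam : ℝ) (a : ℕ → ℝ) : ℕ → ℕ → ℝ
  | 0 => delta 0
  | 1 => a
  | n + 2 => starMul lam (starPow lam a (n + 1)) a

/-- The Stirling number of the second kind `S(n,k)`: the number of partitions of an
`n`-element set into `k` nonempty pairwise disjoint blocks. -/
def stirling2 (n k : ℕ) : ℕ :=
  (Finset.univ.filter (fun π : Finset (Finset (Fin n)) =>
    π.card = k ∧ (∀ B ∈ π, B.Nonempty) ∧
    (∀ B ∈ π, ∀ C ∈ π, B ≠ C → Disjoint B C) ∧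
    π.biUnion id = Finset.univ)).card

/-!
Since `δ₁` is supported at `1`, only the index triples with `u₁ + u₃ = 1` contribute to
`f ⋆ δ₁`, so `(f ⋆ δ₁)(u) = u · (f(u - 1) + λ f(u))`. This is exactly the recurrence satisfied by
`m! · S(n, m) · λ^(n-m)` in `n`, by `S(n + 1, m) = m S(n, m) + S(n, m - 1)`. The counting
definition of `S` obeys that recurrence: a partition of `insert a s` either has `{a}` as a block
(erase it), or is obtained by adding `a` to one of the blocks of a partition of `s`.
-/

open Finset

section SetPartitions

variable {α : Type*} [DecidableEq α] {s B X : Finset α} {π : Finset (Finset α)} {a : α} {k : ℕ}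

structure IsSetPartition (s : Finset α) (π : Finset (Finset α)) : Prop where
  nonempty : ∀ B ∈ π, B.Nonempty
  disjoint : ∀ B ∈ π, ∀ C ∈ π, B ≠ C → Disjoint B C
  biUnion_eq : π.biUnion id = s

theorem isSetPartition_iff :
    IsSetPartition s π ↔ (∀ B ∈ π, B.Nonempty) ∧
      (∀ B ∈ π, ∀ C ∈ π, B ≠ C → Disjoint B C) ∧ π.biUnion id = s :=
  ⟨fun ⟨h₁, h₂, h₃⟩ => ⟨h₁, h₂, h₃⟩, fun ⟨h₁, h₂, h₃⟩ => ⟨h₁, h₂, h₃⟩⟩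

instance (s : Finset α) (π : Finset (Finset α)) : Decidable (IsSetPartition s π) :=
  decidable_of_iff' _ isSetPartition_iff

def setPartitions (s : Finset α) (k : ℕ) : Finset (Finset (Finset α)) :=
  s.powerset.powerset.filter fun π => #π = k ∧ IsSetPartition s π

/-- The union of the blocks of `π` containing `a`; for a partition, the block of `a`. -/
def blockOf (π : Finset (Finset α)) (a : α) : Finset α :=
  (π.filter (a ∈ ·)).sup id

namespace IsSetPartition

theorem subset (h : IsSetPartition s π) (hB : B ∈ π) : B ⊆ s := by
  rw [← h.biUnion_eq]
  exact subset_biUnion_of_mem id hB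

theorem exists_mem (h : IsSetPartition s π) (ha : a ∈ s) : ∃ B ∈ π, a ∈ B := by
  simpa [← h.biUnion_eq] using ha

theorem eq_of_mem_of_mem (h : IsSetPartition s π) {C : Finset α} (hB : B ∈ π) (hC : C ∈ π)
    (haB : a ∈ B) (haC : a ∈ C) : B = C := by
  by_contra hBC
  exact disjoint_left.mp (h.disjoint B hB C hC hBC) haB haC

theorem notMem_of_disjoint (h : IsSetPartition s π) (hB : B.Nonempty) (hBs : Disjoint B s) :
    B ∉ π := fun hBπ => hB.ne_empty (disjoint_self.mp (hBs.mono_right (h.subset hBπ)))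

theorem card_insert_of_disjoint (h : IsSetPartition s π) (hB : B.Nonempty)
    (hBs : Disjoint B s) : #(insert B π) = #π + 1 :=
  card_insert_of_notMem (h.notMem_of_disjoint hB hBs)

theorem insert_of_disjoint (h : IsSetPartition s π) (hB : B.Nonempty) (hBs : Disjoint B s) :
    IsSetPartition (B ∪ s) (insert B π) where
  nonempty := by
    simp only [mem_insert, forall_eq_or_imp]
    exact ⟨hB, h.nonempty⟩
  disjoint := by
    have hBC : ∀ C ∈ π, Disjoint B C := fun C hC => hBs.mono_right (h.subset hC)
    simp only [mem_insert, forall_eq_or_imp]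
    exact ⟨⟨fun hBB => absurd rfl hBB, fun C hC _ => hBC C hC⟩,
      fun C hC => ⟨fun _ => (hBC C hC).symm, h.disjoint C hC⟩⟩
  biUnion_eq := by rw [biUnion_insert, h.biUnion_eq, id]

theorem erase (h : IsSetPartition s π) (hB : B ∈ π) : IsSetPartition (s \ B) (π.erase B) where
  nonempty C hC := h.nonempty C (mem_of_mem_erase hC)
  disjoint C hC D hD := h.disjoint C (mem_of_mem_erase hC) D (mem_of_mem_erase hD)
  biUnion_eq := by
    ext x
    simp only [mem_biUnion, mem_erase, id, mem_sdiff]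
    constructor
    · rintro ⟨C, ⟨hCB, hC⟩, hx⟩
      exact ⟨h.subset hC hx, disjoint_left.mp (h.disjoint C hC B hB hCB) hx⟩
    · rintro ⟨hx, hxB⟩
      obtain ⟨C, hC, hxC⟩ := h.exists_mem hx
      exact ⟨C, ⟨fun hCB => hxB (hCB ▸ hxC), hC⟩, hxC⟩

theorem notMem_erase_of_subset (h : IsSetPartition s π) (hB : B ∈ π) (hX : X.Nonempty)
    (hXB : X ⊆ B) : X ∉ π.erase B :=
  (h.erase hB).notMem_of_disjoint hX (disjoint_sdiff.mono_left hXB)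

theorem blockOf_eq (h : IsSetPartition s π) (hB : B ∈ π) (ha : a ∈ B) : blockOf π a = B := by
  have : π.filter (a ∈ ·) = {B} := by
    ext C
    simp only [mem_filter, mem_singleton]
    exact ⟨fun ⟨hC, haC⟩ => h.eq_of_mem_of_mem hC hB haC ha, by rintro rfl; exact ⟨hB, ha⟩⟩
  rw [blockOf, this, sup_singleton, id]

theorem blockOf_mem (h : IsSetPartition s π) (ha : a ∈ s) : blockOf π a ∈ π ∧ a ∈ blockOf π a := by
  obtain ⟨B, hB, haB⟩ := h.exists_mem ha
  rw [h.blockOf_eq hB haB]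
  exact ⟨hB, haB⟩

theorem empty_iff : IsSetPartition (∅ : Finset α) π ↔ π = ∅ := by
  refine ⟨fun h => eq_empty_of_forall_notMem fun B hB => ?_, ?_⟩
  · exact (h.nonempty B hB).ne_empty (subset_empty.mp (h.subset hB))
  · rintro rfl
    exact ⟨by simp, by simp, by simp⟩

end IsSetPartition

theorem mem_setPartitions : π ∈ setPartitions s k ↔ #π = k ∧ IsSetPartition s π := by
  simp only [setPartitions, mem_filter, and_iff_right_iff_imp, and_imp]
  exact fun _ h => mem_powerset.mpr fun B hB => mem_powerset.mpr (h.subset hB)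

theorem setPartitions_empty (k : ℕ) :
    setPartitions (∅ : Finset α) k = if k = 0 then {∅} else ∅ := by
  ext π
  simp only [mem_setPartitions, IsSetPartition.empty_iff]
  split_ifs with hk <;> aesop

theorem setPartitions_zero (hs : s.Nonempty) : setPartitions s 0 = ∅ := by
  refine eq_empty_of_forall_notMem fun π hπ => ?_
  obtain ⟨hcard, h⟩ := mem_setPartitions.mp hπ
  obtain ⟨a, ha⟩ := hs
  obtain ⟨B, hB, -⟩ := h.exists_mem ha
  exact notMem_empty B (card_eq_zero.mp hcard ▸ hB)

theorem card_setPartitions_filter_singleton_mem (ha : a ∉ s) (k : ℕ) :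
    #{π ∈ setPartitions (insert a s) (k + 1) | {a} ∈ π} = #(setPartitions s k) := by
  have hsa : Disjoint {a} s := disjoint_singleton_left.mpr ha
  refine card_nbij' (·.erase {a}) (insert {a}) ?_ ?_ ?_ ?_
  · intro π hπ
    obtain ⟨hπ, hmem⟩ := mem_filter.mp hπ
    obtain ⟨hcard, h⟩ := mem_setPartitions.mp hπ
    refine mem_setPartitions.mpr ⟨by rw [card_erase_of_mem hmem, hcard, Nat.add_sub_cancel], ?_⟩
    simpa [sdiff_singleton_eq_erase, erase_insert ha] using h.erase hmem
  · intro σ hσ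
    obtain ⟨hcard, h⟩ := mem_setPartitions.mp hσ
    refine mem_filter.mpr ⟨mem_setPartitions.mpr ⟨?_, ?_⟩, mem_insert_self _ _⟩
    · rw [h.card_insert_of_disjoint (singleton_nonempty a) hsa, hcard]
    · rw [insert_eq]
      exact h.insert_of_disjoint (singleton_nonempty a) hsa
  · intro π hπ
    exact insert_erase (mem_filter.mp hπ).2
  · intro σ hσ
    exact erase_insert ((mem_setPartitions.mp hσ).2.notMem_of_disjoint (singleton_nonempty a) hsa)

theorem insert_insert_erase_mem_setPartitions (hπ : π ∈ setPartitions s k) (hB : B ∈ π)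
    (ha : a ∉ s) : insert (insert a B) (π.erase B) ∈ setPartitions (insert a s) k := by
  obtain ⟨hcard, h⟩ := mem_setPartitions.mp hπ
  have hdisj : Disjoint (insert a B) (s \ B) :=
    disjoint_insert_left.mpr ⟨fun h' => ha (mem_sdiff.mp h').1, disjoint_sdiff⟩
  have h' := (h.erase hB).insert_of_disjoint (insert_nonempty a B) hdisj
  rw [insert_union, union_sdiff_of_subset (h.subset hB)] at h'
  refine mem_setPartitions.mpr ⟨?_, h'⟩
  rw [(h.erase hB).card_insert_of_disjoint (insert_nonempty a B) hdisj, card_erase_add_one hB,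
    hcard]

theorem insert_erase_erase_mem_setPartitions (hπ : π ∈ setPartitions (insert a s) k)
    (hB : B ∈ π) (haB : a ∈ B) (hne : (B.erase a).Nonempty) (ha : a ∉ s) :
    insert (B.erase a) (π.erase B) ∈ setPartitions s k := by
  obtain ⟨hcard, h⟩ := mem_setPartitions.mp hπ
  have hdisj : Disjoint (B.erase a) (insert a s \ B) :=
    disjoint_sdiff.mono_left (erase_subset a B)
  have hunion : B.erase a ∪ (insert a s \ B) = s := by
    have hBs := h.subset hB
    ext x
    simp only [mem_union, mem_erase, mem_sdiff]
    grind
  have h' := (h.erase hB).insert_of_disjoint hne hdisj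
  rw [hunion] at h'
  refine mem_setPartitions.mpr ⟨?_, h'⟩
  rw [(h.erase hB).card_insert_of_disjoint hne hdisj, card_erase_add_one hB, hcard]

theorem blockOf_mem_of_singleton_notMem (hπ : π ∈ setPartitions (insert a s) k)
    (hsingle : {a} ∉ π) :
    blockOf π a ∈ π ∧ a ∈ blockOf π a ∧ ((blockOf π a).erase a).Nonempty := by
  obtain ⟨hB, haB⟩ := (mem_setPartitions.mp hπ).2.blockOf_mem (mem_insert_self a s)
  refine ⟨hB, haB, (erase_nonempty haB).mpr ((nontrivial_iff_ne_singleton haB).mpr ?_)⟩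
  exact fun h => hsingle (h ▸ hB)

theorem singleton_notMem_insert_insert_erase (hπ : π ∈ setPartitions s k) (hB : B ∈ π)
    (ha : a ∉ s) : {a} ∉ insert (insert a B) (π.erase B) := by
  have h := (mem_setPartitions.mp hπ).2
  obtain ⟨b, hb⟩ := h.nonempty B hB
  rw [mem_insert, not_or]
  refine ⟨fun haB => ?_, fun hmem => ha (h.subset (mem_of_mem_erase hmem) (mem_singleton_self a))⟩
  have : b ∈ ({a} : Finset α) := haB ▸ mem_insert_of_mem hb
  exact ha (mem_singleton.mp this ▸ h.subset hB hb)

theorem card_setPartitions_filter_singleton_notMem (ha : a ∉ s) (k : ℕ) :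
    #{π ∈ setPartitions (insert a s) (k + 1) | {a} ∉ π} =
      (k + 1) * #(setPartitions s (k + 1)) := by
  have hsigma : #((setPartitions s (k + 1)).sigma id) = (k + 1) * #(setPartitions s (k + 1)) := by
    rw [card_sigma, sum_congr rfl fun σ _ => congrArg card (id_eq σ),
      sum_const_nat fun σ hσ => (mem_setPartitions.mp hσ).1, mul_comm]
  rw [← hsigma]
  refine card_nbij'
    (fun π => ⟨insert ((blockOf π a).erase a) (π.erase (blockOf π a)), (blockOf π a).erase a⟩)
    (fun p => insert (insert a p.2) (p.1.erase p.2)) ?_ ?_ ?_ ?_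
  · intro π hπ
    obtain ⟨hπ, hsingle⟩ := mem_filter.mp hπ
    obtain ⟨hB, haB, hne⟩ := blockOf_mem_of_singleton_notMem hπ hsingle
    exact mem_sigma.mpr ⟨insert_erase_erase_mem_setPartitions hπ hB haB hne ha, mem_insert_self _ _⟩
  · rintro ⟨σ, B⟩ hp
    obtain ⟨hσ, hB⟩ := mem_sigma.mp hp
    exact mem_filter.mpr ⟨insert_insert_erase_mem_setPartitions hσ hB ha,
      singleton_notMem_insert_insert_erase hσ hB ha⟩
  · intro π hπ
    obtain ⟨hπ, hsingle⟩ := mem_filter.mp hπ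
    obtain ⟨hB, haB, hne⟩ := blockOf_mem_of_singleton_notMem hπ hsingle
    dsimp only
    rw [erase_insert ((mem_setPartitions.mp hπ).2.notMem_erase_of_subset hB hne (erase_subset _ _)),
      insert_erase haB, insert_erase hB]
  · rintro ⟨σ, B⟩ hp
    obtain ⟨hσ, hB : B ∈ σ⟩ := mem_sigma.mp hp
    have h := (mem_setPartitions.mp hσ).2
    have hblock : blockOf (insert (insert a B) (σ.erase B)) a = insert a B :=
      (mem_setPartitions.mp (insert_insert_erase_mem_setPartitions hσ hB ha)).2.blockOf_eq
        (mem_insert_self _ _) (mem_insert_self a B)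
    dsimp only
    rw [hblock, erase_insert fun haB => ha (h.subset hB haB),
      erase_insert fun hmem => ha (h.subset (mem_of_mem_erase hmem) (mem_insert_self a B)),
      insert_erase hB]

theorem card_setPartitions_insert_succ (ha : a ∉ s) (k : ℕ) :
    #(setPartitions (insert a s) (k + 1)) =
      (k + 1) * #(setPartitions s (k + 1)) + #(setPartitions s k) := by
  rw [← card_filter_add_card_filter_not (s := setPartitions (insert a s) (k + 1))
    (fun π => {a} ∉ π), card_setPartitions_filter_singleton_notMem ha]
  simp only [not_not, card_setPartitions_filter_singleton_mem ha]

theorem card_setPartitions (s : Finset α) (k : ℕ) :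
    #(setPartitions s k) = Nat.stirlingSecond #s k := by
  induction s using Finset.induction_on generalizing k with
  | empty => cases k <;> simp [setPartitions_empty]
  | insert a s ha ih =>
    rw [card_insert_of_notMem ha]
    cases k with
    | zero => simp [setPartitions_zero (insert_nonempty a s)]
    | succ k => rw [card_setPartitions_insert_succ ha, ih, ih, Nat.stirlingSecond_succ_succ]

end SetPartitions

theorem stirling2_eq_stirlingSecond (n k : ℕ) : stirling2 n k = Nat.stirlingSecond n k := by
  have : stirling2 n k = #(setPartitions (univ : Finset (Fin n)) k) := by
    simp only [stirling2, setPartitions, isSetPartition_iff, powerset_univ]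
  rw [this, card_setPartitions, card_univ, Fintype.card_fin]

theorem starMul_delta_one_apply (lam : ℝ) (f : ℕ → ℝ) (u : ℕ) :
    starMul lam f (delta 1) u = u * (f (u - 1) + lam * f u) := by
  cases u with
  | zero => simp [starMul, delta]
  | succ u =>
    have hfact : ((u + 1).factorial : ℝ) = (u + 1) * u.factorial := by
      push_cast [Nat.factorial_succ]; ring
    have hu : (u.factorial : ℝ) ≠ 0 := by positivity
    -- only `(u₁, u₂, u₃) = (0, u, 1)` and `(1, u, 0)` survive `δ₁(u₁ + u₃)`
    rw [starMul, sum_eq_add (0, u + 1) (1, u) (by simp)]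
    · rw [sum_eq_single (u, 1), sum_eq_single (u, 0)]
      · simp [delta, hfact, add_comm 1 u]
        field_simp
      all_goals simp_all [delta]
      all_goals omega
    · rintro ⟨i, j⟩ hij hne
      refine sum_eq_zero fun q _ => ?_
      have : i + q.2 ≠ 1 := by simp at hij hne; omega
      simp [delta, this]
    all_goals simp [add_comm]

theorem factorial_mul_stirlingSecond_mul_pow_succ_left (lam : ℝ) (n m : ℕ) :
    m * ((m - 1).factorial * Nat.stirlingSecond n (m - 1) * lam ^ (n - (m - 1)) +
        lam * (m.factorial * Nat.stirlingSecond n m * lam ^ (n - m))) =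
      m.factorial * Nat.stirlingSecond (n + 1) m * lam ^ (n + 1 - m) := by
  cases m with
  | zero => simp
  | succ m =>
    rw [Nat.stirlingSecond_succ_succ, Nat.add_sub_cancel, Nat.add_sub_add_right]
    rcases lt_or_ge m n with hmn | hmn
    · obtain ⟨d, rfl⟩ := Nat.exists_eq_add_of_lt hmn
      rw [show m + d + 1 - m = d + 1 by omega, show m + d + 1 - (m + 1) = d by omega]
      push_cast [Nat.factorial_succ]
      ring
    · rw [Nat.stirlingSecond_eq_zero_of_lt (Nat.lt_succ_of_le hmn), Nat.sub_eq_zero_of_le hmn]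
      push_cast [Nat.factorial_succ]
      ring

theorem starPow_delta_one_apply (lam : ℝ) :
    ∀ n m : ℕ, starPow lam (delta 1) n m =
      m.factorial * Nat.stirlingSecond n m * lam ^ (n - m)
  | 0, m => by cases m <;> simp [starPow, delta]
  | 1, m => by
    rcases m with _ | _ | m <;>
      simp [starPow, delta, Nat.stirlingSecond_self, Nat.stirlingSecond_eq_zero_of_lt]
  | n + 2, m => by
    rw [starPow, starMul_delta_one_apply, starPow_delta_one_apply lam (n + 1),
      starPow_delta_one_apply lam (n + 1), factorial_mul_stirlingSecond_mul_pow_succ_left]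

theorem stmt5_general (lam : ℝ) (n : ℕ) :
    (∀ m ≤ n, starPow lam (delta 1) n m =
      (m.factorial : ℝ) * (stirling2 n m : ℝ) * lam ^ (n - m)) ∧
    (∀ m, n < m → starPow lam (delta 1) n m = 0) := by
  refine ⟨fun m _ => ?_, fun m hm => ?_⟩
  · rw [starPow_delta_one_apply, stirling2_eq_stirlingSecond]
  · rw [starPow_delta_one_apply, Nat.stirlingSecond_eq_zero_of_lt hm]
    simp

/-- For `n ≥ 1`, the `n`-fold `⋆`-power of `δ₁` satisfies
`δ₁^{⋆n}(m) = m! · S(n,m) · lam^{n−m}` for `m ≤ n`, and vanishes for `m > n`. -/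
theorem stmt5 (lam : ℝ) (n : ℕ) (hn : 1 ≤ n) :
    (∀ m ≤ n, starPow lam (delta 1) n m =
      (m.factorial : ℝ) * (stirling2 n m : ℝ) * lam ^ (n - m)) ∧
    (∀ m, n < m → starPow lam (delta 1) n m = 0) :=
  stmt5_general lam n
end

section
/- Fix λ ∈ ℝ and integers k, ℓ ≥ 1. Let δ_ℓ^{⋆k} denote the k-fold left-associated ⋆-product δ_ℓ ⋆ δ_ℓ ⋆ ⋯ ⋆ δ_ℓ (k factors). Then for every n ∈ ℕ one has δ_ℓ^{⋆k}(n) = λ^{kℓ−n} · B(n,k,ℓ); in particular δ_ℓ^{⋆k}(n) = 0 unless ℓ ≤ n ≤ kℓ. -/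
/-- `B(n,k,ℓ)`: the number of `k`-tuples `(T₁,…,T_k)` of (not necessarily disjoint)
subsets of `[n]` with `#T_i = ℓ` for all `i` and `T₁ ∪ ⋯ ∪ T_k = [n]`. -/
def Bcover (n k l : ℕ) : ℕ :=
  (Finset.univ.filter (fun T : Fin k → Finset (Fin n) =>
    (∀ i, (T i).card = l) ∧ Finset.univ.biUnion T = Finset.univ)).card

/-! Multiplying by `δ_ℓ` on the right only sees triples with `u₁ + u₃ = ℓ`, hence `u₂ = n - ℓ` and
`(a ⋆ δ_ℓ)(n) = C(n,ℓ) ∑_u C(ℓ,u) λ^u a(u + n - ℓ)`. The covering numbers satisfy the matching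
recursion `B(n,k+1,ℓ) = C(n,ℓ) ∑_u C(ℓ,u) B(u + n - ℓ, k, ℓ)`: choose the first set `T`; the other
`k` sets must have union `U ∪ Tᶜ` for some `U ⊆ T`. Since `δ₀` is the unit of `⋆`, induction on
`k` from `k = 0` gives the formula. -/

open Finset
open scoped Nat

theorem starMul_delta_zero_left (lam : ℝ) (a : ℕ → ℝ) : starMul lam (delta 0) a = a := by
  funext u
  have fst_ne_zero : ∀ x ∈ antidiagonal u, x ≠ (0, u) → x.1 ≠ 0 := by
    intro x hx hne h0
    rw [HasAntidiagonal.mem_antidiagonal] at hx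
    exact hne (Prod.ext h0 (by omega))
  rw [starMul, sum_eq_single_of_mem (0, u) (by simp), sum_eq_single_of_mem (0, u) (by simp)]
  · simp [delta, Nat.factorial_ne_zero]
  · exact fun q hq hne => by simp [delta, fst_ne_zero q hq hne]
  · exact fun p hp hne => sum_eq_zero fun q _ => by simp [delta, fst_ne_zero p hp hne]

theorem starPow_succ (lam : ℝ) (a : ℕ → ℝ) (k : ℕ) :
    starPow lam a (k + 1) = starMul lam (starPow lam a k) a := by
  cases k with
  | zero => rw [starPow, starPow, starMul_delta_zero_left]
  | succ k => rw [starPow]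

theorem factorial_div_eq_choose_mul_choose {n l u : ℕ} (hu : u ≤ l) (hl : l ≤ n) :
    (n ! : ℝ) / (u ! * (n - l)! * (l - u)!) = n.choose l * l.choose u := by
  rw [Nat.cast_choose ℝ hl, Nat.cast_choose ℝ hu]
  field_simp

theorem starMul_delta_right (lam : ℝ) (a : ℕ → ℝ) (l n : ℕ) :
    starMul lam a (delta l) n =
      n.choose l * ∑ u ∈ range (l + 1), l.choose u * (lam ^ u * a (u + (n - l))) := by
  rcases lt_or_ge n l with hnl | hln
  · rw [Nat.choose_eq_zero_of_lt hnl, Nat.cast_zero, zero_mul]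
    refine sum_eq_zero fun p hp => sum_eq_zero fun q hq => ?_
    rw [HasAntidiagonal.mem_antidiagonal] at hp hq
    have : p.1 + q.2 ≠ l := by omega
    simp [delta, this]
  have inner : ∀ i ∈ range (n + 1),
      ∑ q ∈ antidiagonal (n - i), lam ^ i * ((n ! : ℝ) / (i ! * q.1 ! * q.2 !)) *
        a (i + q.1) * delta l (i + q.2) =
      if i ≤ l then n.choose l * (l.choose i * (lam ^ i * a (i + (n - l)))) else 0 := by
    intro i hi
    rw [mem_range] at hi
    split_ifs with hil
    · rw [sum_eq_single_of_mem (n - l, l - i) (by rw [HasAntidiagonal.mem_antidiagonal]; omega)]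
      · rw [delta, if_pos (by omega), factorial_div_eq_choose_mul_choose hil hln]
        ring
      · rintro q hq hne
        rw [HasAntidiagonal.mem_antidiagonal] at hq
        have : i + q.2 ≠ l := fun h => hne (Prod.ext (by omega) (by omega))
        simp [delta, this]
    · refine sum_eq_zero fun q _ => ?_
      have : i + q.2 ≠ l := by omega
      simp [delta, this]
  rw [starMul, Nat.sum_antidiagonal_eq_sum_range_succ_mk, mul_sum, sum_congr rfl inner,
    ← sum_filter]
  congr 1
  ext i
  simp only [mem_filter, mem_range]
  omega

theorem Finset.map_biUnion {ι α β : Type*} [DecidableEq α] [DecidableEq β] (s : Finset ι)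
    (t : ι → Finset α) (e : α ↪ β) : (s.biUnion t).map e = s.biUnion fun i => (t i).map e := by
  simp only [map_eq_image, biUnion_image]

theorem card_tuples_biUnion_eq {α : Type*} [Fintype α] [DecidableEq α] (k l : ℕ) (s : Finset α) :
    #{T : Fin k → Finset α | (∀ i, #(T i) = l) ∧ univ.biUnion T = s} = Bcover #s k l := by
  set e : Fin #s ↪ α := s.equivFin.symm.toEmbedding.trans (.subtype (· ∈ s))
  have he : univ.map e = s := by
    rw [← map_map, map_univ_equiv, univ_eq_attach, attach_map_val]
  have map_preimage : ∀ {T : Fin k → Finset α}, univ.biUnion T = s → ∀ i,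
      ((T i).preimage e e.injective.injOn).map e = T i := by
    rintro T hT i
    obtain ⟨u, -, hu⟩ := subset_map_iff.1 (he ▸ hT ▸ subset_biUnion_of_mem T (mem_univ i))
    rw [hu, preimage_map]
  symm
  refine card_nbij' (fun S i => (S i).map e) (fun T i => (T i).preimage e e.injective.injOn)
    ?_ ?_ ?_ ?_
  · intro S hS
    simp only [coe_filter, mem_univ, true_and, Set.mem_ofPred_eq] at hS ⊢
    refine ⟨fun i => by rw [card_map, hS.1], ?_⟩
    rw [← map_biUnion, hS.2, he]
  · intro T hT
    simp only [coe_filter, mem_univ, true_and, Set.mem_ofPred_eq] at hT ⊢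
    refine ⟨fun i => by rw [← hT.1 i, ← card_map e, map_preimage hT.2], ?_⟩
    apply map_injective e
    rw [map_biUnion, he]
    simp only [map_preimage hT.2, hT.2]
  · intro S _
    funext i
    exact preimage_map e (S i)
  · intro T hT
    funext i
    exact map_preimage (mem_filter.1 hT).2.2 i

theorem Finset.union_eq_univ_and_inter_eq_iff {α : Type*} [Fintype α] [DecidableEq α]
    {A T U : Finset α} (hU : U ⊆ T) : T ∪ A = univ ∧ A ∩ T = U ↔ A = U ∪ Tᶜ := by
  constructor
  · rintro ⟨hcov, rfl⟩
    ext x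
    have := hcov ▸ mem_univ x
    simp only [mem_union, mem_inter, mem_compl] at this ⊢
    tauto
  · rintro rfl
    constructor
    · rw [← union_assoc, union_comm T, union_assoc, union_compl]
      simp
    · rw [union_inter_distrib_right, inter_eq_left.2 hU, inter_comm, inter_compl, union_empty]

theorem card_tuples_union_eq_univ {α : Type*} [Fintype α] [DecidableEq α] (k l : ℕ)
    (T : Finset α) :
    #{S : Fin k → Finset α | (∀ i, #(S i) = l) ∧ T ∪ univ.biUnion S = univ} =
      ∑ U ∈ T.powerset, Bcover (#U + (Fintype.card α - #T)) k l := by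
  rw [card_eq_sum_card_fiberwise (f := fun S => univ.biUnion S ∩ T) (t := T.powerset)
    fun S _ => mem_powerset.2 inter_subset_right]
  refine sum_congr rfl fun U hU => ?_
  have hUT : U ⊆ T := mem_powerset.1 hU
  have hcard : #(U ∪ Tᶜ) = #U + (Fintype.card α - #T) := by
    rw [card_union_of_disjoint (disjoint_compl_right.mono_left hUT), card_compl]
  rw [← hcard, ← card_tuples_biUnion_eq, filter_filter]
  refine congrArg card (filter_congr fun S _ => ?_)
  rw [and_assoc, union_eq_univ_and_inter_eq_iff hUT]

theorem Fin.biUnion_univ_cons {α : Type*} [DecidableEq α] {k : ℕ} (T : Finset α)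
    (S : Fin k → Finset α) : univ.biUnion (Fin.cons T S : Fin (k + 1) → Finset α) =
      T ∪ univ.biUnion S := by
  ext x
  simp [Fin.exists_fin_succ]

theorem Bcover_succ_eq_sum_card (n k l : ℕ) : Bcover n (k + 1) l =
    ∑ T ∈ powersetCard l univ,
      #{S : Fin k → Finset (Fin n) | (∀ i, #(S i) = l) ∧ T ∪ univ.biUnion S = univ} := by
  rw [Bcover, card_eq_sum_card_fiberwise (f := fun S => S 0) (t := powersetCard l univ)
    fun S hS => mem_powersetCard_univ.2 ((mem_filter.1 hS).2.1 0)]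
  refine sum_congr rfl fun T hT => ?_
  refine card_nbij' Fin.tail (fun S => Fin.cons T S) ?_ ?_ ?_ ?_
  · intro S hS
    simp only [coe_filter, mem_filter, mem_univ, true_and, Set.mem_ofPred_eq] at hS ⊢
    obtain ⟨⟨hcard, hcov⟩, rfl⟩ := hS
    refine ⟨fun i => hcard _, ?_⟩
    rw [← Fin.biUnion_univ_cons, Fin.cons_self_tail, hcov]
  · intro S hS
    simp only [coe_filter, mem_filter, mem_univ, true_and, Set.mem_ofPred_eq] at hS ⊢
    refine ⟨⟨Fin.cases (mem_powersetCard_univ.1 hT) hS.1, ?_⟩, Fin.cons_zero _ _⟩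
    rw [Fin.biUnion_univ_cons, hS.2]
  · intro S hS
    simp only [← (mem_filter.1 hS).2, Fin.cons_self_tail]
  · intro S _
    exact Fin.tail_cons _ _

theorem Bcover_succ (n k l : ℕ) : Bcover n (k + 1) l =
    n.choose l * ∑ u ∈ range (l + 1), l.choose u * Bcover (u + (n - l)) k l := by
  calc Bcover n (k + 1) l
      = ∑ _T ∈ powersetCard l (univ : Finset (Fin n)),
          ∑ u ∈ range (l + 1), l.choose u * Bcover (u + (n - l)) k l := by
        rw [Bcover_succ_eq_sum_card]
        refine sum_congr rfl fun T hT => ?_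
        rw [card_tuples_union_eq_univ, Fintype.card_fin,
          sum_powerset_apply_card (fun u => Bcover (u + (n - #T)) k l),
          mem_powersetCard_univ.1 hT]
        simp only [smul_eq_mul]
    _ = _ := by rw [sum_const, card_powersetCard, card_univ, Fintype.card_fin, smul_eq_mul]

theorem Bcover_zero (n l : ℕ) : Bcover n 0 l = if n = 0 then 1 else 0 := by
  rw [Bcover, univ_unique (α := Fin 0 → Finset (Fin n)), filter_singleton]
  rcases n with _ | n
  · simp
  · simp [univ_nonempty.ne_empty.symm]

theorem Bcover_eq_zero_of_lt {n k l : ℕ} (hk : k ≠ 0) (h : n < l) : Bcover n k l = 0 := by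
  rw [Bcover, card_eq_zero, filter_eq_empty_iff]
  rintro T - ⟨hcard, -⟩
  have := (T ⟨0, Nat.pos_of_ne_zero hk⟩).card_le_univ
  rw [hcard, Fintype.card_fin] at this
  omega

theorem Bcover_eq_zero_of_mul_lt {n k l : ℕ} (h : k * l < n) : Bcover n k l = 0 := by
  rw [Bcover, card_eq_zero, filter_eq_empty_iff]
  rintro T - ⟨hcard, hcov⟩
  have := card_biUnion_le (s := univ) (t := T)
  simp only [hcard, hcov, sum_const, card_univ, Fintype.card_fin, smul_eq_mul] at this
  omega

/- The truncated subtractions in the exponents are harmless: `Bcover` vanishes beyond `k * l`. -/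
theorem pow_mul_pow_sub_mul_Bcover (lam : ℝ) {k l n u : ℕ} (hln : l ≤ n) :
    lam ^ u * (lam ^ (k * l - (u + (n - l))) * Bcover (u + (n - l)) k l) =
      lam ^ ((k + 1) * l - n) * Bcover (u + (n - l)) k l := by
  by_cases hB : Bcover (u + (n - l)) k l = 0
  · simp [hB]
  have hle : u + (n - l) ≤ k * l := not_lt.1 (mt Bcover_eq_zero_of_mul_lt hB)
  rw [← mul_assoc, ← pow_add, add_mul, one_mul]
  congr 2
  omega

theorem starPow_delta_apply (lam : ℝ) (k l n : ℕ) :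
    starPow lam (delta l) k n = lam ^ (k * l - n) * Bcover n k l := by
  induction k generalizing n with
  | zero =>
    rw [starPow, Bcover_zero, zero_mul, Nat.zero_sub, pow_zero, one_mul, delta]
    split_ifs <;> simp
  | succ k ih =>
    calc starPow lam (delta l) (k + 1) n
        = (n.choose l : ℝ) * ∑ u ∈ range (l + 1), (l.choose u : ℝ) *
            (lam ^ u * (lam ^ (k * l - (u + (n - l))) * Bcover (u + (n - l)) k l)) := by
          rw [starPow_succ, starMul_delta_right]
          simp only [ih]
      _ = lam ^ ((k + 1) * l - n) *
            ((n.choose l : ℝ) *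
              ∑ u ∈ range (l + 1), (l.choose u : ℝ) * Bcover (u + (n - l)) k l) := by
          rcases lt_or_ge n l with hnl | hln
          · simp [Nat.choose_eq_zero_of_lt hnl]
          rw [mul_left_comm, mul_sum _ _ (lam ^ _)]
          congr 1
          refine sum_congr rfl fun u _ => ?_
          rw [pow_mul_pow_sub_mul_Bcover lam hln]
          ring
      _ = lam ^ ((k + 1) * l - n) * Bcover n (k + 1) l := by
          rw [Bcover_succ]
          push_cast
          rfl

theorem stmt7_general (lam : ℝ) (k l : ℕ) (hk : 1 ≤ k) :
    (∀ n : ℕ, starPow lam (delta l) k n = lam ^ (k * l - n) * (Bcover n k l : ℝ)) ∧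
    (∀ n : ℕ, n < l ∨ k * l < n → starPow lam (delta l) k n = 0) := by
  refine ⟨starPow_delta_apply lam k l, fun n hn => ?_⟩
  rw [starPow_delta_apply]
  rcases hn with hnl | hkln
  · simp [Bcover_eq_zero_of_lt (Nat.one_le_iff_ne_zero.1 hk) hnl]
  · simp [Bcover_eq_zero_of_mul_lt hkln]

/-- For `k, ℓ ≥ 1`, the `k`-fold `⋆`-power of `δ_ℓ` satisfies
`δ_ℓ^{⋆k}(n) = lam^{kℓ−n} · B(n,k,ℓ)` for all `n`; in particular it vanishes
unless `ℓ ≤ n ≤ kℓ`. -/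
theorem stmt7 (lam : ℝ) (k l : ℕ) (hk : 1 ≤ k) (hl : 1 ≤ l) :
    (∀ n : ℕ, starPow lam (delta l) k n = lam ^ (k * l - n) * (Bcover n k l : ℝ)) ∧
    (∀ n : ℕ, n < l ∨ k * l < n → starPow lam (delta l) k n = 0) :=
  stmt7_general lam k l hk
end

section
/- For all integers n, k ≥ 1, the generalized Stirling numbers of the second kind satisfy the recurrence \overline{S}(n,k) = Σ_{i=0}^{n−1} C(n−1, i) · 2^i · \overline{S}(i, k−1), where C(n−1, i) is the binomial coefficient. -/
/-!
Cut a generalized partition `(B₁, …, B_k)` of `[n]` into `(B₁, …, B_{k-1})` and `B_k`. Since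
`max B_k = n` exceeds every other maximum, `T = B₁ ∪ ⋯ ∪ B_{k-1}` is a subset of `[n-1]` and
`(B₁, …, B_{k-1})` is a generalized partition of `T`, while `B_k` is `([n] \ T) ∪ E` for an
arbitrary `E ⊆ T`; conversely every such triple `(T, E, (B₁, …, B_{k-1}))` glues back.
Generalized partitions of `T` are counted by `S̄(|T|, k-1)`, by relabelling `T` monotonically as
`[|T|]`, so summing `2^|T| · S̄(|T|, k-1)` over `T ⊆ [n-1]` by size gives the recurrence.
-/

/-- The generalized Stirling number of the second kind `\overline{S}(n,k)`: the number
of `k`-tuples `(B₁,…,B_k)` of nonempty (not necessarily disjoint) subsets of `[n]`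
with `B₁ ∪ ⋯ ∪ B_k = [n]` and `max B₁ < max B₂ < ⋯ < max B_k`. -/
def gstirling (n k : ℕ) : ℕ :=
  (Finset.univ.filter (fun B : Fin k → Finset (Fin n) =>
    (∀ i, (B i).Nonempty) ∧ Finset.univ.biUnion B = Finset.univ ∧
    ∀ i j : Fin k, i < j → (B i).max < (B j).max)).card

open Finset

theorem Fin.strictMono_snoc_iff {α : Type*} [Preorder α] {n : ℕ} {f : Fin n → α} {x : α} :
    StrictMono (Fin.snoc f x : Fin (n + 1) → α) ↔ StrictMono f ∧ ∀ i, f i < x := by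
  refine ⟨fun h => ⟨fun i j hij => ?_, fun i => ?_⟩, fun ⟨hf, hx⟩ i j hij => ?_⟩
  · simpa using h (Fin.castSucc_lt_castSucc_iff.2 hij)
  · simpa using h (Fin.castSucc_lt_last i)
  · obtain ⟨i, rfl⟩ := Fin.exists_castSucc_eq.2 (Fin.ne_last_of_lt hij)
    obtain ⟨j, rfl⟩ | rfl := j.eq_castSucc_or_eq_last
    · simpa using hf (Fin.castSucc_lt_castSucc_iff.1 hij)
    · simpa using hx i

theorem Fin.biUnion_snoc {α : Type*} [DecidableEq α] {n : ℕ} (C : Fin n → Finset α)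
    (X : Finset α) :
    univ.biUnion (Fin.snoc C X : Fin (n + 1) → Finset α) = univ.biUnion C ∪ X := by
  ext x
  simp [Fin.exists_fin_succ']

theorem Finset.max_image_of_monotone {α β : Type*} [LinearOrder α] [LinearOrder β]
    {f : α → β} (hf : Monotone f) (s : Finset α) :
    (s.image f).max = WithBot.map f s.max := by
  induction s using Finset.induction_on with
  | empty => rfl
  | insert a s _ ih =>
    simp only [image_insert, max_insert, ih]
    exact (Monotone.map_max (WithBot.monotone_map_iff.2 hf) (a := ↑a)).symm

variable {α β : Type*} [LinearOrder α] [LinearOrder β]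

def IsGenPartition {k : ℕ} (T : Finset α) (B : Fin k → Finset α) : Prop :=
  (∀ i, (B i).Nonempty) ∧ univ.biUnion B = T ∧ StrictMono fun i => (B i).max

open Classical in
noncomputable def genPartitions (T : Finset α) (k : ℕ) : Finset (Fin k → Finset α) :=
  {B ∈ Fintype.piFinset fun _ => T.powerset | IsGenPartition T B}

theorem IsGenPartition.subset {k : ℕ} {T : Finset α} {B : Fin k → Finset α}
    (hB : IsGenPartition T B) (i : Fin k) : B i ⊆ T :=
  hB.2.1 ▸ subset_biUnion_of_mem B (mem_univ i)

theorem mem_genPartitions {T : Finset α} {k : ℕ} {B : Fin k → Finset α} :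
    B ∈ genPartitions T k ↔ IsGenPartition T B := by
  simp only [genPartitions, mem_filter, Fintype.mem_piFinset, mem_powerset, and_iff_right_iff_imp]
  exact IsGenPartition.subset

theorem gstirling_eq_card_genPartitions (n k : ℕ) :
    gstirling n k = #(genPartitions (univ : Finset (Fin n)) k) := by
  unfold gstirling
  congr 1
  ext B
  simp [mem_genPartitions, IsGenPartition, StrictMono]

theorem isGenPartition_image_iff (f : α ↪o β) {k : ℕ} {T : Finset α} {B : Fin k → Finset α} :
    IsGenPartition (T.image f) (fun i => (B i).image f) ↔ IsGenPartition T B := by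
  simp only [IsGenPartition, image_nonempty, max_image_of_monotone f.monotone, ← biUnion_image,
    image_inj f.injective]
  exact and_congr_right' (and_congr_right' ⟨fun h _ _ hij => f.withBotMap.lt_iff_lt.1 (h hij),
    fun h _ _ hij => f.withBotMap.lt_iff_lt.2 (h hij)⟩)

theorem card_genPartitions_image (f : α ↪o β) (T : Finset α) (k : ℕ) :
    #(genPartitions (T.image f) k) = #(genPartitions T k) := by
  symm
  refine card_nbij (fun B i => (B i).image f) (fun B hB => ?_) (fun B _ C _ h => ?_) ?_
  · exact mem_genPartitions.2 ((isGenPartition_image_iff f).2 (mem_genPartitions.1 hB))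
  · exact funext fun i => image_injective f.injective (congrFun h i)
  · intro C hC
    have hC := mem_genPartitions.1 hC
    choose B hBT hBC using fun i => subset_image_iff.1 (hC.subset i)
    obtain rfl : (fun i => (B i).image f) = C := funext hBC
    exact ⟨B, mem_genPartitions.2 ((isGenPartition_image_iff f).1 hC), rfl⟩

theorem card_genPartitions_eq_gstirling (T : Finset α) (k : ℕ) :
    #(genPartitions T k) = gstirling #T k := by
  rw [gstirling_eq_card_genPartitions, ← card_genPartitions_image (T.orderEmbOfFin rfl),
    image_orderEmbOfFin_univ]

theorem Finset.max_erase_lt {U : Finset α} {a : α} (ha : U.max = a) : (U.erase a).max < a :=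
  lt_of_le_of_ne (ha ▸ max_mono (erase_subset a U)) max_erase_ne_self

theorem isGenPartition_snoc_iff {U : Finset α} {a : α} (ha : U.max = a) {m : ℕ}
    {C : Fin m → Finset α} {X : Finset α} :
    IsGenPartition U (Fin.snoc C X : Fin (m + 1) → Finset α) ↔
      IsGenPartition (univ.biUnion C) C ∧ univ.biUnion C ⊆ U.erase a ∧
        U \ univ.biUnion C ⊆ X ∧ X ⊆ U := by
  have hmax : (fun i => (Fin.snoc C X : Fin (m + 1) → Finset α) i |>.max) =
      Fin.snoc (fun i => (C i).max) X.max :=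
    Fin.comp_snoc Finset.max C X
  simp only [IsGenPartition, Fin.forall_fin_succ', Fin.snoc_castSucc, Fin.snoc_last,
    Fin.biUnion_snoc, hmax, Fin.strictMono_snoc_iff, true_and]
  constructor
  · rintro ⟨⟨hC, -⟩, hU, hCmono, hCX⟩
    have hXU : X ⊆ U := hU ▸ subset_union_right
    refine ⟨⟨hC, hCmono⟩, fun x hx => mem_erase.2 ⟨?_, hU ▸ mem_union_left X hx⟩,
      sdiff_le_iff.2 hU.ge, hXU⟩
    rintro rfl
    obtain ⟨i, -, hi⟩ := mem_biUnion.1 hx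
    exact lt_irrefl _ <| (le_max hi).trans_lt <| (hCX i).trans_le <| (max_mono hXU).trans ha.le
  · rintro ⟨⟨hC, hCmono⟩, hTa, hUX, hXU⟩
    have haX : a ∈ X := hUX (mem_sdiff.2 ⟨mem_of_max ha, fun h => (mem_erase.1 (hTa h)).1 rfl⟩)
    refine ⟨⟨hC, a, haX⟩, ?_, hCmono, fun i => ?_⟩
    · exact subset_antisymm (union_subset (hTa.trans (erase_subset a U)) hXU)
        (sdiff_le_iff.1 hUX)
    · calc (C i).max ≤ (U.erase a).max :=
            max_mono ((subset_biUnion_of_mem C (mem_univ i)).trans hTa)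
        _ < a := max_erase_lt ha
        _ ≤ X.max := le_max haX

theorem card_genPartitions_succ {U : Finset α} {a : α} (ha : U.max = a) (m : ℕ) :
    #(genPartitions U (m + 1)) = ∑ T ∈ (U.erase a).powerset, 2 ^ #T * #(genPartitions T m) := by
  have hsplit : #(genPartitions U (m + 1)) =
      #((U.erase a).powerset.sigma fun T => T.powerset ×ˢ genPartitions T m) := by
    refine card_nbij'
      (fun B => ⟨univ.biUnion (Fin.init B),
        (B (Fin.last m) ∩ univ.biUnion (Fin.init B), Fin.init B)⟩)
      (fun p => Fin.snoc p.2.2 (U \ p.1 ∪ p.2.1)) ?_ ?_ ?_ ?_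
    · intro B hB
      rw [mem_coe, mem_genPartitions, ← Fin.snoc_init_self B, isGenPartition_snoc_iff ha] at hB
      simp only [mem_coe, mem_sigma, mem_product, mem_powerset, mem_genPartitions]
      exact ⟨hB.2.1, inter_subset_right, hB.1⟩
    · rintro ⟨T, E, C⟩ hp
      simp only [mem_coe, mem_sigma, mem_product, mem_powerset, mem_genPartitions] at hp ⊢
      obtain ⟨hTa, hET, hC⟩ := hp
      rw [isGenPartition_snoc_iff ha, hC.2.1]
      exact ⟨hC, hTa, subset_union_left,
        union_subset sdiff_subset (hET.trans (hTa.trans (erase_subset a U)))⟩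
    · intro B hB
      rw [mem_coe, mem_genPartitions, ← Fin.snoc_init_self B, isGenPartition_snoc_iff ha] at hB
      obtain ⟨-, -, hUX, hXU⟩ := hB
      have hX : U \ univ.biUnion (Fin.init B) ∪ B (Fin.last m) ∩ univ.biUnion (Fin.init B) =
          B (Fin.last m) := by
        grind
      simp only [hX, Fin.snoc_init_self]
    · rintro ⟨T, E, C⟩ hp
      simp only [mem_coe, mem_sigma, mem_product, mem_powerset, mem_genPartitions] at hp
      obtain ⟨-, hET, hC⟩ := hp
      simp only [Fin.init_snoc, Fin.snoc_last, hC.2.1, union_inter_distrib_right, sdiff_inter_self,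
        empty_union, inter_eq_left.2 hET]
  rw [hsplit, card_sigma]
  refine sum_congr rfl fun T _ => ?_
  rw [card_product, card_powerset]

/-- The recurrence `\overline{S}(n,k) = Σ_{i=0}^{n−1} C(n−1,i) · 2^i · \overline{S}(i,k−1)`
for `n, k ≥ 1`. -/
theorem stmt9 (n k : ℕ) (hn : 1 ≤ n) (hk : 1 ≤ k) :
    gstirling n k = ∑ i ∈ Finset.range n, (n - 1).choose i * 2 ^ i * gstirling i (k - 1) := by
  obtain ⟨n, rfl⟩ := Nat.exists_eq_add_of_le' hn
  obtain ⟨m, rfl⟩ := Nat.exists_eq_add_of_le' hk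
  have hlast : (univ : Finset (Fin (n + 1))).max = Fin.last n :=
    le_antisymm (Finset.max_le fun x _ => WithBot.coe_le_coe.2 (Fin.le_last x))
      (le_max (mem_univ _))
  rw [Nat.add_sub_cancel, Nat.add_sub_cancel, gstirling_eq_card_genPartitions,
    card_genPartitions_succ hlast]
  simp only [card_genPartitions_eq_gstirling]
  rw [sum_powerset_apply_card (fun i => 2 ^ i * gstirling i m), card_erase_of_mem (mem_univ _),
    card_fin, Nat.add_sub_cancel]
  simp only [smul_eq_mul, mul_assoc]
end

section
/- For all integers n ≥ k ≥ 1, \overline{S}(n,k) = 2^{C(k,2)} · Σ Π_{i=1}^{n−k} (2^{k−m_i+i} − 1), where the sum ranges over all strictly increasing sequences 1 ≤ m₁ < m₂ < ⋯ < m_{n−k} ≤ n−1 of integers. (For such sequences one automatically has k − m_i + i ≥ 1 for all i; when n = k the sum consists of a single empty product equal to 1.) -/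
open Finset

theorem Finset.max_eq_coe_iff {α : Type*} [LinearOrder α] {s : Finset α} {a : α} :
    s.max = a ↔ a ∈ s ∧ ∀ b ∈ s, b ≤ a :=
  ⟨fun h => ⟨mem_of_max h, fun _ hb => le_max_of_eq hb h⟩,
    fun ⟨ha, hle⟩ => le_antisymm (Finset.max_le fun b hb => WithBot.coe_le_coe.2 (hle b hb))
      (le_max ha)⟩

namespace GStirling

variable {α : Type*} [LinearOrder α]

section Transpose

variable {ι : Type*} [Fintype ι] [DecidableEq ι]

def familiesWithMax [Fintype α] (μ : ι → α) : Finset (ι → Finset α) :=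
  univ.filter fun B => (∀ j, (B j).max = μ j) ∧ ∀ x, ∃ j, x ∈ B j

def incidences (μ : ι → α) (x : α) : Finset (Finset ι) :=
  univ.filter fun u => u.Nonempty ∧ (∀ j, μ j = x → j ∈ u) ∧ ∀ j ∈ u, x ≤ μ j

theorem card_familiesWithMax [Fintype α] (μ : ι → α) :
    #(familiesWithMax μ) = ∏ x, #(incidences μ x) := by
  rw [← Fintype.card_piFinset]
  refine card_nbij' (fun B x => univ.filter (x ∈ B ·)) (fun f j => univ.filter (j ∈ f ·))
    ?_ ?_ (fun B _ => by ext; simp) (fun f _ => by ext; simp)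
  · intro B hB
    simp only [familiesWithMax, coe_filter, mem_univ, true_and, Set.mem_ofPred_eq,
      max_eq_coe_iff] at hB
    simp only [mem_coe, Fintype.mem_piFinset, incidences, mem_filter, mem_univ, true_and]
    intro x
    obtain ⟨j, hj⟩ := hB.2 x
    exact ⟨⟨j, by simpa using hj⟩, fun j hx => by simpa [← hx] using (hB.1 j).1,
      fun j hj => (hB.1 j).2 x (by simpa using hj)⟩
  · intro f hf
    simp only [mem_coe, Fintype.mem_piFinset, incidences, mem_filter, mem_univ, true_and] at hf
    simp only [familiesWithMax, coe_filter, mem_univ, true_and, Set.mem_ofPred_eq,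
      max_eq_coe_iff, mem_filter]
    refine ⟨fun j => ⟨(hf (μ j)).2.1 j rfl, fun x hx => (hf x).2.2 j hx⟩, fun x => ?_⟩
    obtain ⟨j, hj⟩ := (hf x).1
    exact ⟨j, by simpa using hj⟩

theorem card_incidences_of_forall_ne {μ : ι → α} {x : α} (hx : ∀ j, μ j ≠ x) :
    #(incidences μ x) = 2 ^ #{j | x < μ j} - 1 := by
  have : incidences μ x = (univ.filter (x < μ ·)).powerset.erase ∅ := by
    ext u
    simp only [incidences, mem_filter, mem_univ, true_and, mem_erase, mem_powerset,
      subset_iff, nonempty_iff_ne_empty]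
    exact ⟨fun ⟨hu, _, hle⟩ => ⟨hu, fun j hj => lt_of_le_of_ne (hle j hj) (hx j).symm⟩,
      fun ⟨hu, hlt⟩ => ⟨hu, fun j h => absurd h (hx j), fun j hj => (hlt hj).le⟩⟩
  rw [this, card_erase_of_mem (empty_mem_powerset _), card_powerset]

end Transpose

theorem card_incidences_apply {k : ℕ} {μ : Fin k → α} (hμ : StrictMono μ) (j : Fin k) :
    #(incidences μ (μ j)) = 2 ^ (k - j - 1) := by
  have : incidences μ (μ j) = Icc {j} (Ici j) := by
    ext u
    simp only [incidences, mem_filter, mem_univ, true_and, mem_Icc, singleton_subset_iff,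
      hμ.injective.eq_iff, hμ.le_iff_le]
    simp only [subset_iff, mem_Ici]
    exact ⟨fun ⟨_, hj, hle⟩ => ⟨hj j rfl, hle⟩,
      fun ⟨hj, hle⟩ => ⟨⟨j, hj⟩, fun _ h => h ▸ hj, hle⟩⟩
  rw [this, card_Icc_finset (singleton_subset_iff.2 (mem_Ici.2 le_rfl)), Fin.card_Ici,
    card_singleton]

theorem sum_sub_sub_one_eq_choose_two (k : ℕ) : ∑ j : Fin k, (k - j - 1) = k.choose 2 := by
  calc ∑ j : Fin k, (k - j - 1) = ∑ j : Fin k, (j.rev : ℕ) :=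
        sum_congr rfl fun j _ => by rw [Fin.val_rev]; omega
    _ = ∑ j : Fin k, (j : ℕ) := Equiv.sum_comp Fin.revPerm (fun j => (j : ℕ))
    _ = ∑ i ∈ range k, i := Fin.sum_univ_eq_sum_range id k
    _ = k.choose 2 := by rw [sum_range_id, Nat.choose_two_right]

theorem card_filter_lt_apply_eq {k : ℕ} {μ : Fin k → α}
    (hμ : StrictMono μ) (x : α) :
    #{j | x < μ j} = #((univ.image μ).filter (x < ·)) := by
  rw [filter_image, card_image_of_injective _ hμ.injective]

theorem prod_card_incidences [Fintype α] {k : ℕ} {μ : Fin k → α} (hμ : StrictMono μ) :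
    ∏ x, #(incidences μ x) =
      2 ^ k.choose 2 * ∏ x ∈ (univ.image μ)ᶜ, (2 ^ #((univ.image μ).filter (x < ·)) - 1) := by
  rw [← prod_mul_prod_compl (univ.image μ), prod_image fun a _ b _ h => hμ.injective h]
  congr 1
  · simp_rw [card_incidences_apply hμ]
    rw [prod_pow_eq_pow_sum, sum_sub_sub_one_eq_choose_two]
  · refine prod_congr rfl fun x hx => ?_
    have hne (j) : μ j ≠ x := fun h => mem_compl.1 hx (h ▸ mem_image_of_mem μ (mem_univ j))
    rw [card_incidences_of_forall_ne hne, card_filter_lt_apply_eq hμ]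

theorem gstirling_eq_sum_card_familiesWithMax (n k : ℕ) :
    gstirling n k = ∑ μ ∈ univ.filter (StrictMono : (Fin k → Fin n) → Prop),
      #(familiesWithMax μ) := by
  refine (congrArg card ?_).trans (card_biUnion ?_)
  · ext B
    simp only [familiesWithMax, mem_filter, mem_univ, true_and, mem_biUnion]
    constructor
    · rintro ⟨hne, hcov, hmax⟩
      refine ⟨fun j => (B j).max' (hne j), fun i j hij => ?_, fun j => (coe_max' _).symm,
        fun x => by simpa using eq_univ_iff_forall.1 hcov x⟩
      have := hmax i j hij
      rwa [← coe_max' (hne i), ← coe_max' (hne j), WithBot.coe_lt_coe] at this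
    · rintro ⟨μ, hμ, hmax, hcov⟩
      refine ⟨fun j => ⟨μ j, mem_of_max (hmax j)⟩,
        eq_univ_of_forall fun x => by simpa using hcov x, fun i j hij => ?_⟩
      rw [hmax, hmax, WithBot.coe_lt_coe]
      exact hμ hij
  · intro μ _ ν _ hne
    refine disjoint_left.2 fun B hμ hν => hne (funext fun j => ?_)
    simp only [familiesWithMax, mem_filter] at hμ hν
    exact WithBot.coe_injective ((hμ.2.1 j).symm.trans (hν.2.1 j))

theorem sum_strictMono_eq_sum_powersetCard {β : Type*} [Fintype α] [AddCommMonoid β] (r : ℕ)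
    (s : Finset α) (f : Finset α → β) :
    ∑ μ ∈ univ.filter (fun μ : Fin r → α => StrictMono μ ∧ ∀ i, μ i ∈ s), f (univ.image μ) =
      ∑ S ∈ powersetCard r s, f S := by
  classical
  refine sum_nbij (fun μ => univ.image μ) ?_ ?_ ?_ fun _ _ => rfl
  · intro μ hμ
    simp only [mem_filter, mem_univ, true_and] at hμ
    rw [mem_powersetCard, card_image_of_injective _ hμ.1.injective, card_fin]
    exact ⟨image_subset_iff.2 fun i _ => hμ.2 i, rfl⟩
  · intro μ hμ ν hν h
    simp only [coe_filter, mem_univ, true_and, Set.mem_ofPred_eq] at hμ hν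
    rw [← hμ.1.range_inj hν.1, ← Set.image_univ, ← Set.image_univ, ← coe_univ, ← coe_image,
      ← coe_image]
    exact congrArg _ h
  · intro S hS
    rw [mem_coe, mem_powersetCard] at hS
    refine ⟨S.orderEmbOfFin hS.2, ?_, image_orderEmbOfFin_univ S hS.2⟩
    simp only [coe_filter, mem_univ, true_and, Set.mem_ofPred_eq]
    exact ⟨(S.orderEmbOfFin hS.2).strictMono, fun i => hS.1 (orderEmbOfFin_mem S hS.2 i)⟩

theorem card_filter_image_le_apply {r : ℕ} {m : Fin r → α}
    (hm : StrictMono m) (i : Fin r) : #((univ.image m).filter (· ≤ m i)) = i + 1 := by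
  rw [filter_image, card_image_of_injective _ hm.injective]
  simp_rw [hm.le_iff_le]
  rw [← Fin.card_Iic]
  congr 1
  ext; simp

theorem card_filter_lt_eq {n : ℕ} (T : Finset (Fin n)) (x : Fin n) :
    #(T.filter (x < ·)) = #T + #(Tᶜ.filter (· ≤ x)) - (x + 1) := by
  have above : #(T.filter (x < ·)) + #(T.filter (· ≤ x)) = #T := by
    simpa [not_lt] using card_filter_add_card_filter_not (s := T) (p := (x < ·))
  have below : #(T.filter (· ≤ x)) + #(Tᶜ.filter (· ≤ x)) = x + 1 := by
    rw [← Fin.card_Iic, ← card_filter_add_card_filter_not (s := Iic x) (p := (· ∈ T))]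
    congr 2 <;> ext <;> simp [and_comm]
  omega

theorem finRotate_le_finRotate_iff {n : ℕ} {x y : Fin (n + 1)} (hx : x ≠ Fin.last n)
    (hy : y ≠ Fin.last n) : finRotate (n + 1) x ≤ finRotate (n + 1) y ↔ x ≤ y := by
  rw [Fin.le_def, Fin.le_def, coe_finRotate_of_ne_last hx, coe_finRotate_of_ne_last hy]
  omega

theorem last_mem_of_prod_ne_zero {n : ℕ} {T : Finset (Fin (n + 1))}
    (hT : ∏ x ∈ Tᶜ, (2 ^ #(T.filter (x < ·)) - 1) ≠ 0) : Fin.last n ∈ T := by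
  by_contra h
  refine hT (prod_eq_zero (mem_compl.2 h) ?_)
  rw [filter_false_of_mem fun x _ => not_lt.2 (Fin.le_last x), card_empty]
  rfl

/-- `T` is the set of maxima and `S` the set of non-maxima in 1-based labels, which is what
`finRotate` makes of `Tᶜ`; the last element, always a maximum, would go to `0`. -/
theorem sum_prod_compl_eq_sum_prod_finRotate {n k : ℕ} (hk : k ≤ n + 1) :
    ∑ T ∈ powersetCard k (univ : Finset (Fin (n + 1))),
        ∏ x ∈ Tᶜ, (2 ^ #(T.filter (x < ·)) - 1) =
      ∑ S ∈ powersetCard (n + 1 - k) ((univ : Finset (Fin (n + 1))).erase 0),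
        ∏ y ∈ S, (2 ^ (k + #(S.filter (· ≤ y)) - y) - 1) := by
  set rot := finRotate (n + 1)
  rw [← sum_filter_of_ne fun T _ => last_mem_of_prod_ne_zero]
  refine sum_nbij' (fun T => Tᶜ.map rot.toEmbedding) (fun S => (S.map rot.symm.toEmbedding)ᶜ)
    ?_ ?_ (fun T _ => by simp [map_map]) (fun S _ => by simp [map_map]) ?_
  · intro T hT
    simp only [mem_filter, mem_powersetCard] at hT ⊢
    refine ⟨fun y hy => ?_, by rw [card_map, card_compl, Fintype.card_fin, hT.1.2]⟩
    obtain ⟨x, hxT, rfl⟩ := mem_map.1 hy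
    have hx : x ≠ Fin.last n := fun h => mem_compl.1 hxT (h ▸ hT.2)
    refine mem_erase.2 ⟨fun h => hx (rot.injective ?_), mem_univ _⟩
    rw [Equiv.toEmbedding_apply] at h
    rw [h, finRotate_last]
  · intro S hS
    simp only [mem_powersetCard, mem_filter] at hS ⊢
    refine ⟨⟨subset_univ _, by rw [card_compl, card_map, Fintype.card_fin, hS.2]; omega⟩, ?_⟩
    rw [mem_compl, mem_map_equiv, Equiv.symm_symm, finRotate_last]
    exact fun h => (mem_erase.1 (hS.1 h)).1 rfl
  · intro T hT
    simp only [mem_filter, mem_powersetCard] at hT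
    rw [prod_map]
    refine prod_congr rfl fun x hx => ?_
    have not_last {y} (hy : y ∈ Tᶜ) : y ≠ Fin.last n := fun h => mem_compl.1 hy (h ▸ hT.2)
    have below : #((Tᶜ.map rot.toEmbedding).filter (· ≤ rot x)) = #(Tᶜ.filter (· ≤ x)) := by
      rw [filter_map, card_map]
      exact congrArg card
        (filter_congr fun y hy => finRotate_le_finRotate_iff (not_last hy) (not_last hx))
    rw [Equiv.toEmbedding_apply, below, coe_finRotate_of_ne_last (not_last hx),
      card_filter_lt_eq, hT.1.2]

end GStirling

/-- The sequence `m₁ < ⋯ < m_{n−k}` is encoded as a strictly monotone `m : Fin (n−k) → Fin n`,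
`m_i` being `m ⟨i−1⟩`, and the exponent `k − m_i + i` is written as `k + ((i−1) + 1) − m_i`. -/
theorem stmt11 (n k : ℕ) (hk : 1 ≤ k) (hkn : k ≤ n) :
    gstirling n k = 2 ^ k.choose 2 *
      ∑ m ∈ Finset.univ.filter (fun m : Fin (n - k) → Fin n =>
          (∀ i j : Fin (n - k), i < j → m i < m j) ∧
          ∀ i, 1 ≤ (m i : ℕ) ∧ (m i : ℕ) ≤ n - 1),
        ∏ i : Fin (n - k), (2 ^ (k + ((i : ℕ) + 1) - (m i : ℕ)) - 1) := by
  obtain ⟨n, rfl⟩ : ∃ n', n = n' + 1 := ⟨n - 1, by omega⟩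
  have by_maxima : gstirling (n + 1) k = 2 ^ k.choose 2 *
      ∑ T ∈ powersetCard k (univ : Finset (Fin (n + 1))),
        ∏ x ∈ Tᶜ, (2 ^ #(T.filter (x < ·)) - 1) := by
    rw [GStirling.gstirling_eq_sum_card_familiesWithMax, mul_sum,
      ← GStirling.sum_strictMono_eq_sum_powersetCard]
    refine sum_congr (by ext; simp) fun μ hμ => ?_
    rw [GStirling.card_familiesWithMax, GStirling.prod_card_incidences (mem_filter.1 hμ).2.1]
  rw [by_maxima, GStirling.sum_prod_compl_eq_sum_prod_finRotate hkn,
    ← GStirling.sum_strictMono_eq_sum_powersetCard]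
  congr 1
  refine sum_congr ?_ fun m hm => ?_
  · ext m
    simp only [mem_filter, mem_univ, true_and, mem_erase, ne_eq, Fin.ext_iff, Fin.val_zero,
      and_true]
    exact and_congr Iff.rfl (forall_congr' fun i => by have := (m i).isLt; omega)
  · have hm : StrictMono m := (mem_filter.1 hm).2.1
    rw [prod_image fun a _ b _ h => hm.injective h]
    simp_rw [GStirling.card_filter_image_le_apply hm]
end

section
/- For every integer n ≥ 1, \overline{S}(n,2) = 3^{n−1} − 1. -/
open Finset

section Coverings

variable {α : Type*} [Fintype α] [DecidableEq α]

theorem card_filter_union_eq_univ (X : Finset α) : #{Y : Finset α | X ∪ Y = univ} = 2 ^ #X := by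
  have hIcc : ({Y | X ∪ Y = univ} : Finset (Finset α)) = Icc Xᶜ univ := by
    ext Y
    simp [eq_univ_iff_forall, subset_iff, or_iff_not_imp_left]
  rw [hIcc, card_Icc_finset (subset_univ _), card_univ, card_compl,
    Nat.sub_sub_self (card_le_univ X)]

theorem card_filter_subset_union_eq_univ (S : Finset α) :
    #{p : Finset α × Finset α | p.1 ⊆ S ∧ p.1 ∪ p.2 = univ} = 3 ^ #S := by
  rw [card_eq_sum_ones, sum_finset_product _ S.powerset (fun X => {Y | X ∪ Y = univ}) (by simp)]
  simp_rw [← card_eq_sum_ones, card_filter_union_eq_univ]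
  simpa using sum_pow_mul_eq_add_pow (2 : ℕ) 1 S

end Coverings

section MaxLtMax

variable {α : Type*} [Fintype α] [LinearOrder α] [OrderTop α]

theorem nonempty_and_max_lt_max_iff {X Y : Finset α} (hXY : X ∪ Y = univ) :
    (Y.Nonempty ∧ X.max < Y.max) ↔ ⊤ ∉ X := by
  have htop : ⊤ ∈ X ∨ ⊤ ∈ Y := mem_union.1 (hXY ▸ mem_univ ⊤)
  constructor
  · rintro ⟨-, hlt⟩ hX
    exact hlt.not_ge (Finset.max_eq_top.2 hX ▸ le_top)
  · intro hX
    have hY : ⊤ ∈ Y := htop.resolve_left hX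
    refine ⟨⟨⊤, hY⟩, ?_⟩
    rw [Finset.max_eq_top.2 hY]
    exact lt_top_iff_ne_top.2 (mt Finset.max_eq_top.1 hX)

theorem card_filter_max_lt_max :
    #{p : Finset α × Finset α |
        p.1.Nonempty ∧ p.2.Nonempty ∧ p.1 ∪ p.2 = univ ∧ p.1.max < p.2.max}
      = 3 ^ (Fintype.card α - 1) - 1 := by
  calc _ = #(({p | p.1 ⊆ {⊤}ᶜ ∧ p.1 ∪ p.2 = univ} : Finset (Finset α × Finset α)).erase
            (∅, univ)) := by
        congr 1
        ext ⟨X, Y⟩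
        simp only [mem_filter, mem_univ, true_and, mem_erase, ne_eq, Prod.mk.injEq,
          subset_compl_singleton]
        by_cases hXY : X ∪ Y = univ
        · have hempty : X = ∅ ∧ Y = univ ↔ X = ∅ :=
            ⟨And.left, fun h => ⟨h, by simpa [h] using hXY⟩⟩
          rw [← nonempty_and_max_lt_max_iff hXY, hempty, ← not_nonempty_iff_eq_empty, not_not]
          tauto
        · simp [hXY]
    _ = 3 ^ (Fintype.card α - 1) - 1 := by
        rw [card_erase_of_mem (by simp), card_filter_subset_union_eq_univ, card_compl,
          card_singleton]

end MaxLtMax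

theorem gstirling_two_eq_card (n : ℕ) :
    gstirling n 2 = #{p : Finset (Fin n) × Finset (Fin n) |
        p.1.Nonempty ∧ p.2.Nonempty ∧ p.1 ∪ p.2 = univ ∧ p.1.max < p.2.max} := by
  refine card_equiv (piFinTwoEquiv fun _ => Finset (Fin n)) fun B => ?_
  simp [Fin.forall_fin_two, Fin.univ_succ, and_assoc]

/-- `\overline{S}(n,2) = 3^{n−1} − 1` for every `n ≥ 1`. -/
theorem stmt12 (n : ℕ) (hn : 1 ≤ n) : gstirling n 2 = 3 ^ (n - 1) - 1 := by
  obtain ⟨m, rfl⟩ := Nat.exists_eq_add_of_le' hn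
  rw [gstirling_two_eq_card, card_filter_max_lt_max, Fintype.card_fin]
end

section
/- For every integer n ≥ 1, \overline{S}(n, n−1) = 2^{C(n−1,2)} · (2^n − n − 1), where C(n−1,2) = (n−1)(n−2)/2. -/
/-! Fix `k` and consider generalized partitions of `Fin (k + 1)` into `k` blocks. Their block
maxima form a strictly increasing map `Fin k → Fin (k + 1)`, so they are `t.succAbove` for the
unique value `t` they miss. Once the maxima `mᵢ` are fixed, block `i` is `{mᵢ}` together with an
arbitrary subset of `[0, mᵢ)`, which gives `2 ^ ∑ mᵢ = 2 ^ (C(k,2) + k - t)` tuples. Their union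
contains every point except possibly `t`, and `2 ^ C(k,2)` of these tuples miss `t`. Summing
`2 ^ C(k,2) * (2 ^ (k - t) - 1)` over `t` gives the formula. -/

open Finset

theorem Fin.exists_succAbove_eq_of_strictMono {k : ℕ} {f : Fin k → Fin (k + 1)}
    (hf : StrictMono f) : ∃ t, Fin.succAbove t = f := by
  obtain ⟨t, ht⟩ : ∃ t, (univ.image f)ᶜ = {t} := by
    rw [← card_eq_one, card_compl, card_image_of_injective _ hf.injective]
    simp
  refine ⟨t, ((strictMono_succAbove t).range_inj hf).1 ?_⟩
  rw [range_succAbove, ← Set.image_univ, ← coe_univ, ← coe_image, ← compl_compl (univ.image f),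
    ht, coe_compl, coe_singleton]

section MaxFibres

-- `DecidableEq α` is a separate argument so that, at `α = Fin n`, the instances in these statements
-- are syntactically the ones elaborated in goals about `Fin n`.
variable {α : Type*} [LinearOrder α] [DecidableEq α] [LocallyFiniteOrderBot α]

theorem Finset.max_eq_coe_iff_mem_Icc {s : Finset α} {m : α} :
    s.max = m ↔ s ∈ Icc {m} (Iic m) := by
  rw [mem_Icc, singleton_subset_iff]
  simp only [subset_iff, mem_Iic]
  refine ⟨fun h => ⟨mem_of_max h, fun a ha => le_max_of_eq ha h⟩, fun ⟨hm, hle⟩ => ?_⟩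
  exact le_antisymm (Finset.max_le fun a ha => WithBot.coe_le_coe.2 (hle ha)) (le_max hm)

theorem Finset.max_eq_coe_and_notMem_iff_mem_Icc {s : Finset α} {m t : α} :
    s.max = m ∧ t ∉ s ↔ s ∈ Icc {m} ((Iic m).erase t) := by
  simp only [max_eq_coe_iff_mem_Icc, mem_Icc, subset_erase]
  tauto

variable {k : ℕ} [Fintype α]

theorem filter_forall_max_eq (g : Fin k → α) :
    ({B | ∀ i, (B i).max = g i} : Finset (Fin k → Finset α)) =
      Fintype.piFinset fun i => Icc {g i} (Iic (g i)) := by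
  ext B
  simp only [mem_filter, mem_univ, true_and, Fintype.mem_piFinset, max_eq_coe_iff_mem_Icc]

theorem filter_forall_max_eq_and_notMem (g : Fin k → α) (t : α) :
    ({B | ∀ i, (B i).max = g i ∧ t ∉ B i} : Finset (Fin k → Finset α)) =
      Fintype.piFinset fun i => Icc {g i} ((Iic (g i)).erase t) := by
  ext B
  simp only [mem_filter, mem_univ, true_and, Fintype.mem_piFinset,
    max_eq_coe_and_notMem_iff_mem_Icc]

end MaxFibres

theorem card_filter_forall_max_eq_and_exists_mem {α : Type*} {k : ℕ} [LinearOrder α]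
    [DecidableEq α] [Fintype α] (g : Fin k → α) (t : α) :
    #{B : Fin k → Finset α | (∀ i, (B i).max = g i) ∧ ∃ i, t ∈ B i} =
      #{B : Fin k → Finset α | ∀ i, (B i).max = g i} -
        #{B : Fin k → Finset α | ∀ i, (B i).max = g i ∧ t ∉ B i} := by
  have hbad : ({B ∈ {B | ∀ i, (B i).max = g i} | ¬∃ i, t ∈ B i} : Finset (Fin k → Finset α)) =
      ({B | ∀ i, (B i).max = g i ∧ t ∉ B i} : Finset (Fin k → Finset α)) := by
    ext B
    simp only [mem_filter, mem_univ, true_and, not_exists, forall_and]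
  rw [← hbad, ← filter_filter]
  exact Nat.eq_sub_of_add_eq (card_filter_add_card_filter_not _)

theorem card_filter_forall_max_eq {k n : ℕ} (g : Fin k → Fin n) :
    #{B : Fin k → Finset (Fin n) | ∀ i, (B i).max = g i} = 2 ^ ∑ i, (g i : ℕ) := by
  rw [filter_forall_max_eq, Fintype.card_piFinset, ← prod_pow_eq_pow_sum]
  refine prod_congr rfl fun i _ => ?_
  rw [card_Icc_finset (singleton_subset_iff.2 (mem_Iic.2 le_rfl)), Fin.card_Iic, card_singleton,
    Nat.add_sub_cancel]

theorem Fin.card_Iic_succAbove_erase {k : ℕ} (t : Fin (k + 1)) (i : Fin k) :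
    #((Iic (t.succAbove i)).erase t) = i + 1 := by
  rcases lt_or_ge (castSucc i) t with h | h
  · rw [succAbove_of_castSucc_lt t i h, erase_eq_of_notMem (by simpa using h), card_Iic,
      val_castSucc]
  · have ht : t ∈ Iic (t.succAbove i) := by
      rw [succAbove_of_le_castSucc t i h]
      exact mem_Iic.2 (h.trans (castSucc_le_succ i))
    rw [card_erase_of_mem ht, card_Iic, succAbove_of_le_castSucc t i h, val_succ,
      Nat.add_sub_cancel]

theorem Fin.sum_val_eq_choose_two (k : ℕ) : ∑ i : Fin k, (i : ℕ) = k.choose 2 := by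
  rw [Fin.sum_univ_eq_sum_range (fun i => i) k, sum_range_id, Nat.choose_two_right]

theorem Fin.sum_val_succAbove (k : ℕ) (t : Fin (k + 1)) :
    ∑ i : Fin k, (t.succAbove i : ℕ) = k.choose 2 + (k - t) := by
  have h := Fin.sum_univ_succAbove (fun x : Fin (k + 1) => (x : ℕ)) t
  rw [Fin.sum_val_eq_choose_two, Nat.choose_succ_succ', Nat.choose_one_right] at h
  simp only [Nat.reduceAdd] at h
  have := t.is_le
  omega

theorem card_filter_forall_max_eq_succAbove_and_notMem {k : ℕ} (t : Fin (k + 1)) :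
    #{B : Fin k → Finset (Fin (k + 1)) | ∀ i, (B i).max = t.succAbove i ∧ t ∉ B i} =
      2 ^ k.choose 2 := by
  rw [filter_forall_max_eq_and_notMem, Fintype.card_piFinset, ← Fin.sum_val_eq_choose_two,
    ← prod_pow_eq_pow_sum]
  refine prod_congr rfl fun i _ => ?_
  rw [card_Icc_finset (singleton_subset_iff.2 (mem_erase.2 ⟨t.succAbove_ne i, mem_Iic.2 le_rfl⟩)),
    Fin.card_Iic_succAbove_erase, card_singleton, Nat.add_sub_cancel]

theorem card_filter_forall_max_eq_succAbove_and_exists_mem {k : ℕ} (t : Fin (k + 1)) :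
    #{B : Fin k → Finset (Fin (k + 1)) | (∀ i, (B i).max = t.succAbove i) ∧ ∃ i, t ∈ B i} =
      2 ^ k.choose 2 * (2 ^ (k - t) - 1) := by
  rw [card_filter_forall_max_eq_and_exists_mem, card_filter_forall_max_eq,
    card_filter_forall_max_eq_succAbove_and_notMem, Fin.sum_val_succAbove, pow_add,
    Nat.mul_sub_one]

theorem genPartition_iff_exists_succAbove {k : ℕ} {B : Fin k → Finset (Fin (k + 1))} :
    ((∀ i, (B i).Nonempty) ∧ univ.biUnion B = univ ∧ ∀ i j, i < j → (B i).max < (B j).max) ↔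
      ∃ t : Fin (k + 1), (∀ i, (B i).max = t.succAbove i) ∧ ∃ i, t ∈ B i := by
  constructor
  · rintro ⟨hne, hcover, hlt⟩
    have hmax : ∀ i, (B i).max = (B i).max' (hne i) := fun i => (coe_max' (hne i)).symm
    obtain ⟨t, ht⟩ := Fin.exists_succAbove_eq_of_strictMono (f := fun i => (B i).max' (hne i))
      fun i j hij => WithBot.coe_lt_coe.1 (by simpa only [hmax] using hlt i j hij)
    have ht_mem : t ∈ univ.biUnion B := hcover ▸ mem_univ t
    obtain ⟨i₀, -, hi₀⟩ := mem_biUnion.1 ht_mem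
    exact ⟨t, fun i => (hmax i).trans (congrArg _ (congrFun ht i).symm), i₀, hi₀⟩
  · rintro ⟨t, hmax, i₀, hi₀⟩
    refine ⟨fun i => ⟨_, mem_of_max (hmax i)⟩, ?_, fun i j hij => ?_⟩
    · refine eq_univ_of_forall fun x => mem_biUnion.2 ?_
      rcases eq_or_ne x t with rfl | hx
      · exact ⟨i₀, mem_univ _, hi₀⟩
      · obtain ⟨i, rfl⟩ := Fin.exists_succAbove_eq hx
        exact ⟨i, mem_univ _, mem_of_max (hmax i)⟩
    · rw [hmax, hmax, WithBot.coe_lt_coe]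
      exact Fin.strictMono_succAbove t hij

theorem gstirling_succ_eq_sum (k : ℕ) :
    gstirling (k + 1) k = ∑ t : Fin (k + 1),
      #{B : Fin k → Finset (Fin (k + 1)) | (∀ i, (B i).max = t.succAbove i) ∧ ∃ i, t ∈ B i} := by
  rw [← card_biUnion]
  · unfold gstirling
    congr 1
    ext B
    simp only [mem_filter, mem_univ, true_and, mem_biUnion, genPartition_iff_exists_succAbove]
  · intro t _ s _ hts
    refine disjoint_left.2 fun B hBt hBs => hts (Fin.succAbove_left_injective (funext fun i => ?_))
    exact WithBot.coe_injective (((mem_filter.1 hBt).2.1 i).symm.trans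
      ((mem_filter.1 hBs).2.1 i))

theorem sum_range_two_pow_sub_one (m : ℕ) : ∑ j ∈ range m, (2 ^ j - 1) = 2 ^ m - m - 1 := by
  induction m with
  | zero => rfl
  | succ m ih =>
    rw [sum_range_succ, ih, pow_succ]
    have := Nat.lt_two_pow_self (n := m)
    omega

theorem gstirling_succ_self (k : ℕ) :
    gstirling (k + 1) k = 2 ^ k.choose 2 * (2 ^ (k + 1) - (k + 1) - 1) := by
  simp only [gstirling_succ_eq_sum, card_filter_forall_max_eq_succAbove_and_exists_mem]
  rw [← mul_sum, Fin.sum_univ_eq_sum_range (fun t => 2 ^ (k - t) - 1),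
    ← sum_range_two_pow_sub_one, ← sum_range_reflect (fun j => 2 ^ j - 1)]
  simp only [Nat.add_sub_cancel]

/-- `\overline{S}(n, n−1) = 2^{C(n−1,2)} · (2^n − n − 1)` for every `n ≥ 1`. -/
theorem stmt13 (n : ℕ) (hn : 1 ≤ n) :
    gstirling n (n - 1) = 2 ^ (n - 1).choose 2 * (2 ^ n - n - 1) := by
  obtain ⟨k, rfl⟩ := Nat.exists_eq_add_of_le' hn
  rw [Nat.add_sub_cancel, gstirling_succ_self]
end
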